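/- arXiv:1711.11148 — 5 statements merged into one kernel-verified Lean document; each statement's English description precedes it below -/
import Mathlib

section
/- Let 𝓕 be a construction scheme of some type (m_k, n_k, r_k)_{k<ω}. If F ∈ 𝓕_k with canonical decomposition F = ⋃_{i<n_k} F_i, E ∈ 𝓕_l with l < k, and E ⊆ F, then there is some i < n_k with E ⊆ F_i. -/
noncomputable section
open scoped Classical

/-- The first uncountable ordinal, `ω₁`. -/
def omega1 : Ordinal.{0} := (Cardinal.aleph 1).ord

/-- `ω₁` viewed as a linearly ordered type: the set of countable ordinals. -/
abbrev Omega1 := {o : Ordinal.{0} // o < omega1}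

section Basic

variable {Ω : Type*} [LinearOrder Ω]

/-- `A ⊑ B` : `A` is an initial segment of `B` with respect to the order. -/
def IsInitialSegment (A B : Finset Ω) : Prop :=
  A ⊆ B ∧ ∀ x ∈ B, ∀ y ∈ A, x ≤ y → x ∈ A

/-- The unique order preserving bijection from `E` onto `F` (meaningful when
`|E| = |F|`), extended by the identity off `E`. -/
def opMap (E F : Finset Ω) (x : Ω) : Ω :=
  if h : x ∈ E ∧ F.card = E.card then
    ((F.orderIsoOfFin h.2) ((E.orderIsoOfFin rfl).symm ⟨x, h.1⟩) : Ω)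
  else x

/-- `A` is an interval of `B`: a set of consecutive elements of `B`. -/
def IsIntervalOf (A B : Finset Ω) : Prop :=
  A ⊆ B ∧ ∀ x ∈ A, ∀ z ∈ A, ∀ y ∈ B, x < y → y < z → y ∈ A

end Basic

/-- A type `(m_k, n_k, r_k)_{k<ω}`: `m 0 = 1`, `r k < m (k-1)` and `k < n k` for `k ≥ 1`,
every value is attained by `r` infinitely often, and `m k = n k * (m (k-1) - r k) + r k`. -/
structure SchemeType where
  m : ℕ → ℕ
  n : ℕ → ℕ
  r : ℕ → ℕ
  m_zero : m 0 = 1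
  r_lt_m : ∀ k, 1 ≤ k → r k < m (k - 1)
  k_lt_n : ∀ k, 1 ≤ k → k < n k
  r_infinitely_often : ∀ r' : ℕ, {k : ℕ | 1 ≤ k ∧ r k = r'}.Infinite
  m_rec : ∀ k, 1 ≤ k → m k = n k * (m (k - 1) - r k) + r k

/-- A construction scheme of type `τ` on a linear order `Ω` (in the paper, `Ω = ω₁` or `Ω = ω`):
a family of finite subsets of `Ω` partitioned into levels, with a root `R(F) ⊑ F` of size `r k`
for every `F` in level `k`, which is cofinal in `[Ω]^{<ω}`, whose members at a common level
pairwise intersect in initial segments of both, and such that every `F` at level `k ≥ 1` has a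
unique canonical decomposition `F = ⋃_{i < n k} Fᵢ` into level `k-1` members forming an
increasing Δ-system with root `R(F)`.  The canonical decomposition of `F` is `decomp F`. -/
structure ConstructionScheme (τ : SchemeType) (Ω : Type*) [LinearOrder Ω] where
  level : ℕ → Set (Finset Ω)
  root : Finset Ω → Finset Ω
  decomp : Finset Ω → ℕ → Finset Ω
  cover : ∀ A : Finset Ω, ∃ k, ∃ F ∈ level k, A ⊆ F
  level_eq : ∀ k l F, F ∈ level k → F ∈ level l → k = l
  card_eq : ∀ k, ∀ F ∈ level k, F.card = τ.m k
  root_card : ∀ k, ∀ F ∈ level k, (root F).card = τ.r k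
  root_initSeg : ∀ k, ∀ F ∈ level k, IsInitialSegment (root F) F
  inter_initSeg : ∀ k, ∀ E ∈ level k, ∀ F ∈ level k, IsInitialSegment (E ∩ F) E
  decomp_mem : ∀ k, 1 ≤ k → ∀ F ∈ level k, ∀ i < τ.n k, decomp F i ∈ level (k - 1)
  decomp_union : ∀ k, 1 ≤ k → ∀ F ∈ level k,
    F = (Finset.range (τ.n k)).biUnion (decomp F)
  decomp_root : ∀ k, 1 ≤ k → ∀ F ∈ level k, ∀ i < τ.n k, ∀ j < τ.n k, i ≠ j →
    decomp F i ∩ decomp F j = root F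
  decomp_increasing : ∀ k, 1 ≤ k → ∀ F ∈ level k, ∀ i j, i < j → j < τ.n k →
    ∀ x ∈ decomp F i \ root F, ∀ y ∈ decomp F j \ root F, x < y
  root_lt_decomp : ∀ k, 1 ≤ k → ∀ F ∈ level k, ∀ i < τ.n k,
    ∀ x ∈ root F, ∀ y ∈ decomp F i \ root F, x < y
  decomp_unique : ∀ k, 1 ≤ k → ∀ F ∈ level k, ∀ G : ℕ → Finset Ω,
    (∀ i < τ.n k, G i ∈ level (k - 1)) →
    F = (Finset.range (τ.n k)).biUnion G →
    (∀ i < τ.n k, ∀ j < τ.n k, i ≠ j → G i ∩ G j = root F) →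
    (∀ i j, i < j → j < τ.n k →
      ∀ x ∈ G i \ root F, ∀ y ∈ G j \ root F, x < y) →
    (∀ i < τ.n k, ∀ x ∈ root F, ∀ y ∈ G i \ root F, x < y) →
    ∀ i < τ.n k, G i = decomp F i

namespace ConstructionScheme

variable {τ : SchemeType} {Ω : Type*} [LinearOrder Ω]

/-- The scheme `S` captures the finite Δ-system `t 0, …, t (n-1)` with root `ρ`:
there are `k ≥ 1` and `F ∈ 𝓕_k` with canonical decomposition `(Fᵢ)_{i<n_k}` such that
`ρ ⊆ R(F)`, `t i \ ρ ⊆ Fᵢ \ R(F)` and `φᵢ(t 0) = t i` for all `i < n`. -/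
def CapturesFamily (S : ConstructionScheme τ Ω) (n : ℕ) (t : ℕ → Finset Ω)
    (ρ : Finset Ω) : Prop :=
  ∃ k, 1 ≤ k ∧ n ≤ τ.n k ∧ ∃ F ∈ S.level k,
    ρ ⊆ S.root F ∧
    (∀ i < n, t i \ ρ ⊆ S.decomp F i \ S.root F) ∧
    (∀ i < n, (t 0).image (opMap (S.decomp F 0) (S.decomp F i)) = t i)

/-- The scheme `S` captures the points `ξ 0 < … < ξ (n-1)`: there are `k ≥ 1` and `F ∈ 𝓕_k`
with canonical decomposition `(Fᵢ)_{i<n_k}` such that `ξ i ∈ Fᵢ \ R(F)` and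
`φᵢ(ξ 0) = ξ i` for all `i < n`. -/
def CapturesPoints (S : ConstructionScheme τ Ω) (n : ℕ) (ξ : ℕ → Ω) : Prop :=
  ∃ k, 1 ≤ k ∧ n ≤ τ.n k ∧ ∃ F ∈ S.level k,
    ∀ i < n, ξ i ∈ S.decomp F i \ S.root F ∧
      opMap (S.decomp F 0) (S.decomp F i) (ξ 0) = ξ i

end ConstructionScheme

/-- `(s_ξ)_{ξ<ω₁}` is an (uncountable, increasing) Δ-system with root `ρ`:
`s α ∩ s β = ρ` and `max (s α \ ρ) < min (s β \ ρ)` whenever `α < β`. -/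
def IsDeltaSystem (s : Omega1 → Finset Omega1) (ρ : Finset Omega1) : Prop :=
  ∀ α β : Omega1, α < β → s α ∩ s β = ρ ∧ ∀ x ∈ s α \ ρ, ∀ y ∈ s β \ ρ, x < y

namespace ConstructionScheme

variable {τ : SchemeType}

/-- `S` is an `n`-capturing construction scheme: every uncountable Δ-system
`(s_ξ)_{ξ<ω₁}` with root `ρ` has `n` members `s_{ξ_0}, …, s_{ξ_{n-1}}` (with
`ξ_0 < … < ξ_{n-1}`) captured by `S`. -/
def IsNCapturing (S : ConstructionScheme τ Omega1) (n : ℕ) : Prop :=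
  ∀ (s : Omega1 → Finset Omega1) (ρ : Finset Omega1), IsDeltaSystem s ρ →
    ∃ ξ : ℕ → Omega1, (∀ i j, i < j → j < n → ξ i < ξ j) ∧
      S.CapturesFamily n (fun i => s (ξ i)) ρ

/-- `S` is capturing: `n`-capturing for every `n ≥ 2`. -/
def IsCapturing (S : ConstructionScheme τ Omega1) : Prop :=
  ∀ n, 2 ≤ n → S.IsNCapturing n

/-- The poset `ℙ_n`: finite `P ⊆ ω₁` such that no `ξ_0 < … < ξ_n` in `P` are captured
by the scheme, ordered by reverse inclusion. -/
def PosetP (S : ConstructionScheme τ Omega1) (n : ℕ) : Set (Finset Omega1) :=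
  {P | ∀ ξ : ℕ → Omega1, (∀ i ≤ n, ξ i ∈ P) → (∀ i j, i < j → j ≤ n → ξ i < ξ j) →
    ¬ S.CapturesPoints (n + 1) ξ}

end ConstructionScheme

/-- Initial segments of `E` are totally ordered by inclusion. -/
theorem initSeg_subset_or {Ω : Type*} [LinearOrder Ω] {A B E : Finset Ω}
    (hA : IsInitialSegment A E) (hB : IsInitialSegment B E) : A ⊆ B ∨ B ⊆ A := by
  by_contra h
  push_neg at h
  obtain ⟨a, haA, haB⟩ := Finset.not_subset.mp h.1
  obtain ⟨b, hbB, hbA⟩ := Finset.not_subset.mp h.2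
  rcases le_total a b with hab | hab
  · exact haB (hB.2 a (hA.1 haA) b hbB hab)
  · exact hbA (hA.2 b (hB.1 hbB) a haA hab)

/-- For `E ∈ 𝓕_l` and `G ∈ 𝓕_j` with `l ≤ j`, `E ∩ G` is an initial segment of `E`. -/
theorem inter_initSeg_of_le {τ : SchemeType} {Ω : Type*} [LinearOrder Ω]
    (S : ConstructionScheme τ Ω) {l : ℕ} {E : Finset Ω} (hE : E ∈ S.level l) :
    ∀ j, l ≤ j → ∀ G ∈ S.level j, IsInitialSegment (E ∩ G) E := by
  intro j hj
  induction j, hj using Nat.le_induction with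
  | base => exact fun G hG => S.inter_initSeg l E hE G hG
  | succ j hj ih =>
    intro G hG
    have h1 : 1 ≤ j + 1 := Nat.le_add_left 1 j
    have hun := S.decomp_union (j + 1) h1 G hG
    refine ⟨Finset.inter_subset_left, fun x hx y hy hxy => ?_⟩
    have hyG : y ∈ G := (Finset.mem_inter.mp hy).2
    rw [hun, Finset.mem_biUnion] at hyG
    obtain ⟨i, hi, hyi⟩ := hyG
    have hGi := S.decomp_mem (j + 1) h1 G hG i (Finset.mem_range.mp hi)
    simp only [Nat.add_sub_cancel] at hGi
    have hxi : x ∈ E ∩ S.decomp G i :=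
      (ih (S.decomp G i) hGi).2 x hx y
        (Finset.mem_inter.mpr ⟨(Finset.mem_inter.mp hy).1, hyi⟩) hxy
    refine Finset.mem_inter.mpr ⟨hx, ?_⟩
    rw [hun, Finset.mem_biUnion]
    exact ⟨i, hi, (Finset.mem_inter.mp hxi).2⟩

/-- If `F ∈ 𝓕_k` has canonical decomposition `(Fᵢ)_{i<n_k}`, `E ∈ 𝓕_l`
with `l < k` and `E ⊆ F`, then `E ⊆ Fᵢ` for some `i < n_k`. -/
theorem subset_decomp_of_subset {τ : SchemeType} (S : ConstructionScheme τ Omega1)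
    {k l : ℕ} (hlk : l < k) {E F : Finset Omega1}
    (hF : F ∈ S.level k) (hE : E ∈ S.level l) (hEF : E ⊆ F) :
    ∃ i < τ.n k, E ⊆ S.decomp F i := by
  have hk1 : 1 ≤ k := by omega
  have hn : 0 < τ.n k := lt_of_le_of_lt (Nat.zero_le k) (τ.k_lt_n k hk1)
  -- each E ∩ decomp F i is an initial segment of E
  have hinit : ∀ i < τ.n k, IsInitialSegment (E ∩ S.decomp F i) E := by
    intro i hi
    have hFi := S.decomp_mem k hk1 F hF i hi
    exact inter_initSeg_of_le S hE (k - 1) (by omega) _ hFi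
  -- pick i maximizing the cardinality of E ∩ decomp F i
  obtain ⟨i, hi, hmax⟩ := Finset.exists_max_image (Finset.range (τ.n k))
    (fun i => (E ∩ S.decomp F i).card) ⟨0, Finset.mem_range.mpr hn⟩
  rw [Finset.mem_range] at hi
  refine ⟨i, hi, fun x hx => ?_⟩
  have hxF : x ∈ F := hEF hx
  rw [S.decomp_union k hk1 F hF, Finset.mem_biUnion] at hxF
  obtain ⟨j, hj, hxj⟩ := hxF
  have hsub : E ∩ S.decomp F j ⊆ E ∩ S.decomp F i := by
    rcases initSeg_subset_or (hinit j (Finset.mem_range.mp hj)) (hinit i hi) with h | h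
    · exact h
    · have hcard := hmax j hj
      exact le_of_eq (Finset.eq_of_subset_of_card_le h hcard).symm
  exact (Finset.mem_inter.mp (hsub (Finset.mem_inter.mpr ⟨hx, hxj⟩))).2
end
end

section
/- Let 𝓕 be a construction scheme of some type (m_k, n_k, r_k)_{k<ω}. For E, F ∈ 𝓕_k, let φ_{E,F} : E → F be the unique order-preserving bijection. Then the pointwise image under φ_{E,F} of the family 𝓕↾E = {L ∈ 𝓕 : L ⊆ E} is exactly the family 𝓕↾F = {L ∈ 𝓕 : L ⊆ F}. -/
noncomputable section
open scoped Classical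

namespace OpAux

variable {Ω : Type*} [LinearOrder Ω]

theorem opMap_def {E F : Finset Ω} (hc : F.card = E.card) {x : Ω} (hx : x ∈ E) :
    opMap E F x = ((F.orderIsoOfFin hc) ((E.orderIsoOfFin rfl).symm ⟨x, hx⟩) : Ω) := by
  rw [opMap, dif_pos ⟨hx, hc⟩]

theorem opMap_mem {E F : Finset Ω} (hc : F.card = E.card) {x : Ω} (hx : x ∈ E) :
    opMap E F x ∈ F := by
  rw [opMap_def hc hx]; exact ((F.orderIsoOfFin hc) _).2

theorem opMap_strictMonoOn {E F : Finset Ω} (hc : F.card = E.card) {x y : Ω}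
    (hx : x ∈ E) (hy : y ∈ E) (hxy : x < y) : opMap E F x < opMap E F y := by
  rw [opMap_def hc hx, opMap_def hc hy]
  have h1 : ((E.orderIsoOfFin rfl).symm ⟨x, hx⟩) < ((E.orderIsoOfFin rfl).symm ⟨y, hy⟩) := by
    rw [OrderIso.lt_iff_lt]; exact hxy
  exact (F.orderIsoOfFin hc).lt_iff_lt.2 h1

theorem opMap_unique {E F : Finset Ω} (hc : F.card = E.card) {f : Ω → Ω}
    (hfs : ∀ x ∈ E, f x ∈ F) (hmono : ∀ x ∈ E, ∀ y ∈ E, x < y → f x < f y) :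
    ∀ x ∈ E, f x = opMap E F x := by
  intro x hx
  set g : Fin E.card → Ω := fun i => f (E.orderEmbOfFin rfl i) with hg
  have hgmem : ∀ i, g i ∈ F := fun i => hfs _ (Finset.orderEmbOfFin_mem E rfl i)
  have hgmono : StrictMono g := fun i j hij =>
    hmono _ (Finset.orderEmbOfFin_mem E rfl i) _ (Finset.orderEmbOfFin_mem E rfl j)
      ((E.orderEmbOfFin rfl).strictMono hij)
  have hgu := Finset.orderEmbOfFin_unique hc hgmem hgmono
  set i := (E.orderIsoOfFin rfl).symm ⟨x, hx⟩ with hi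
  have hxi : x = E.orderEmbOfFin rfl i := by
    have := (E.orderIsoOfFin rfl).apply_symm_apply ⟨x, hx⟩
    rw [← Finset.coe_orderIsoOfFin_apply, this]
  rw [opMap_def hc hx]
  calc f x = g i := by rw [hg]; simp [← hxi]
    _ = F.orderEmbOfFin hc i := by rw [hgu]
    _ = _ := by rw [← Finset.coe_orderIsoOfFin_apply]

theorem opMap_self {E : Finset Ω} {x : Ω} (hx : x ∈ E) : opMap E E x = x :=
  (opMap_unique rfl (fun _ h => h) (fun _ _ _ _ h => h) x hx).symm

theorem opMap_opMap {E F : Finset Ω} (hc : F.card = E.card) {x : Ω} (hx : x ∈ E) :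
    opMap F E (opMap E F x) = x := by
  have h : ∀ y ∈ E, opMap F E (opMap E F y) = opMap E E y :=
    opMap_unique rfl (fun y hy => opMap_mem hc.symm (opMap_mem hc hy))
      (fun y hy z hz hyz => opMap_strictMonoOn hc.symm (opMap_mem hc hy) (opMap_mem hc hz)
        (opMap_strictMonoOn hc hy hz hyz))
  rw [h x hx, opMap_self hx]

theorem opMap_image {E F : Finset Ω} (hc : F.card = E.card) :
    E.image (opMap E F) = F := by
  apply Finset.Subset.antisymm
  · intro y hy; rcases Finset.mem_image.1 hy with ⟨x, hx, rfl⟩; exact opMap_mem hc hx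
  · intro y hy
    exact Finset.mem_image.2 ⟨opMap F E y, opMap_mem hc.symm hy, opMap_opMap hc.symm hy⟩

/-- two initial segments are comparable -/
theorem initSeg_chain {A B E : Finset Ω} (hA : IsInitialSegment A E)
    (hB : IsInitialSegment B E) : A ⊆ B ∨ B ⊆ A := by
  by_contra h
  push_neg at h
  obtain ⟨a, haA, haB⟩ := Finset.not_subset.1 h.1
  obtain ⟨b, hbB, hbA⟩ := Finset.not_subset.1 h.2
  rcases le_total a b with hab | hab
  · exact haB (hB.2 a (hA.1 haA) b hbB hab)
  · exact hbA (hA.2 b (hB.1 hbB) a haA hab)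

theorem initSeg_eq_of_card {A B E : Finset Ω} (hA : IsInitialSegment A E)
    (hB : IsInitialSegment B E) (hc : A.card = B.card) : A = B := by
  rcases initSeg_chain hA hB with h | h
  · exact Finset.eq_of_subset_of_card_le h (le_of_eq hc.symm)
  · exact (Finset.eq_of_subset_of_card_le h (le_of_eq hc)).symm

theorem initSeg_trans {A C E : Finset Ω} (hA : IsInitialSegment A E) (hAC : A ⊆ C)
    (hCE : C ⊆ E) : IsInitialSegment A C :=
  ⟨hAC, fun x hx y hy hxy => hA.2 x (hCE hx) y hy hxy⟩

/-- image of an initial segment is an initial segment -/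
theorem opMap_image_initSeg {A E F : Finset Ω} (hc : F.card = E.card)
    (hA : IsInitialSegment A E) : IsInitialSegment (A.image (opMap E F)) F := by
  constructor
  · intro y hy; rcases Finset.mem_image.1 hy with ⟨x, hx, rfl⟩
    exact opMap_mem hc (hA.1 hx)
  · intro z hz y hy hzy
    rcases Finset.mem_image.1 hy with ⟨a, haA, rfl⟩
    set w := opMap F E z with hw
    have hwE : w ∈ E := opMap_mem hc.symm hz
    have hwz : opMap E F w = z := opMap_opMap hc.symm hz
    have hwa : w ≤ a := by
      by_contra hcon
      push_neg at hcon
      have := opMap_strictMonoOn hc (hA.1 haA) hwE hcon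
      rw [hwz] at this
      exact absurd this (not_lt.2 hzy)
    have : w ∈ A := hA.2 w hwE a haA hwa
    exact Finset.mem_image.2 ⟨w, this, hwz⟩

/-- opMap agrees with opMap of matching initial segments -/
theorem opMap_agree_initSeg {A B E F : Finset Ω} (hc : F.card = E.card)
    (hA : IsInitialSegment A E) (hB : IsInitialSegment B F) (hAB : B.card = A.card) :
    ∀ x ∈ A, opMap E F x = opMap A B x := by
  have himg : A.image (opMap E F) = B := by
    apply initSeg_eq_of_card (opMap_image_initSeg hc hA) hB
    rw [Finset.card_image_of_injOn, hAB]
    intro x hx y hy hxy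
    by_contra h
    rcases lt_or_gt_of_ne h with h | h
    · exact absurd hxy (ne_of_lt (opMap_strictMonoOn hc (hA.1 hx) (hA.1 hy) h))
    · exact absurd hxy.symm (ne_of_lt (opMap_strictMonoOn hc (hA.1 hy) (hA.1 hx) h))
  exact opMap_unique hAB
    (fun x hx => himg ▸ Finset.mem_image_of_mem _ hx)
    (fun x hx y hy hxy => opMap_strictMonoOn hc (hA.1 hx) (hA.1 hy) hxy)

end OpAux

namespace SchemeAux

open OpAux

theorem m_strictMono (τ : SchemeType) : StrictMono τ.m := by
  apply strictMono_nat_of_lt_succ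
  intro k
  have hk1 : 1 ≤ k + 1 := by omega
  have hr := τ.r_lt_m (k + 1) hk1
  have hn := τ.k_lt_n (k + 1) hk1
  have hrec := τ.m_rec (k + 1) hk1
  simp only [Nat.add_sub_cancel] at hr hrec
  have h2 : 2 * (τ.m k - τ.r (k + 1)) ≤ τ.n (k + 1) * (τ.m k - τ.r (k + 1)) :=
    Nat.mul_le_mul_right _ (by omega)
  omega

variable {τ : SchemeType} {Ω : Type*} [LinearOrder Ω] (S : ConstructionScheme τ Ω)

theorem decomp_subset {k : ℕ} (hk : 1 ≤ k) {F : Finset Ω} (hF : F ∈ S.level k)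
    {i : ℕ} (hi : i < τ.n k) : S.decomp F i ⊆ F := by
  intro x hx
  rw [S.decomp_union k hk F hF]
  exact Finset.mem_biUnion.2 ⟨i, Finset.mem_range.2 hi, hx⟩

theorem root_subset_decomp {k : ℕ} (hk : 1 ≤ k) {F : Finset Ω} (hF : F ∈ S.level k)
    {i : ℕ} (hi : i < τ.n k) : S.root F ⊆ S.decomp F i := by
  have hn2 : 2 ≤ τ.n k := by have := τ.k_lt_n k hk; omega
  obtain ⟨j, hjn, hij⟩ : ∃ j, j < τ.n k ∧ i ≠ j := by
    rcases Nat.eq_zero_or_pos i with h | h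
    · exact ⟨1, by omega, by omega⟩
    · exact ⟨0, by omega, by omega⟩
  rw [← S.decomp_root k hk F hF i hi j hjn hij]
  exact Finset.inter_subset_left

theorem root_initSeg_decomp {k : ℕ} (hk : 1 ≤ k) {F : Finset Ω} (hF : F ∈ S.level k)
    {i : ℕ} (hi : i < τ.n k) : IsInitialSegment (S.root F) (S.decomp F i) :=
  initSeg_trans (S.root_initSeg k F hF) (root_subset_decomp S hk hF hi)
    (decomp_subset S hk hF hi)

/-- Lemma A: intersections across levels are initial segments. -/
theorem inter_initSeg_le : ∀ k l, l ≤ k → ∀ E ∈ S.level l, ∀ F ∈ S.level k,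
    IsInitialSegment (E ∩ F) E := by
  intro k
  induction k with
  | zero =>
    intro l hl E hE F hF
    have : l = 0 := Nat.le_zero.1 hl
    subst this
    exact S.inter_initSeg 0 E hE F hF
  | succ k ih =>
    intro l hl E hE F hF
    rcases eq_or_lt_of_le hl with h | h
    · subst h; exact S.inter_initSeg _ E hE F hF
    · have hlk : l ≤ k := by omega
      constructor
      · exact Finset.inter_subset_left
      · intro x hx y hy hxy
        have hyF : y ∈ F := (Finset.mem_inter.1 hy).2
        rw [S.decomp_union (k + 1) (by omega) F hF] at hyF
        obtain ⟨i, hi, hyi⟩ := Finset.mem_biUnion.1 hyF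
        have hdi : S.decomp F i ∈ S.level k := by
          have := S.decomp_mem (k + 1) (by omega) F hF i (Finset.mem_range.1 hi)
          simpa using this
        have hseg := ih l hlk E hE (S.decomp F i) hdi
        have hxEi : x ∈ E ∩ S.decomp F i :=
          hseg.2 x hx y (Finset.mem_inter.2 ⟨(Finset.mem_inter.1 hy).1, hyi⟩) hxy
        exact Finset.mem_inter.2 ⟨(Finset.mem_inter.1 hxEi).1,
          decomp_subset S (by omega) hF (Finset.mem_range.1 hi) (Finset.mem_inter.1 hxEi).2⟩

theorem chain_max {A : ℕ → Finset Ω} :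
    ∀ n, 0 < n → (∀ i < n, ∀ j < n, A i ⊆ A j ∨ A j ⊆ A i) →
    ∃ i < n, ∀ j < n, A j ⊆ A i := by
  intro n
  induction n with
  | zero => omega
  | succ n ih =>
    intro _ hchain
    rcases Nat.eq_zero_or_pos n with h | h
    · subst h
      refine ⟨0, by omega, fun j hj => ?_⟩
      have hj0 : j = 0 := by omega
      rw [hj0]
    · obtain ⟨i, hi, hmax⟩ := ih h (fun i hi j hj => hchain i (by omega) j (by omega))
      rcases hchain i (by omega) n (by omega) with hc | hc
      · refine ⟨n, by omega, fun j hj => ?_⟩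
        rcases Nat.lt_or_ge j n with h' | h'
        · exact (hmax j h').trans hc
        · have hjn : j = n := by omega
          rw [hjn]
      · refine ⟨i, by omega, fun j hj => ?_⟩
        rcases Nat.lt_or_ge j n with h' | h'
        · exact hmax j h'
        · have hjn : j = n := by omega
          rw [hjn]; exact hc

/-- Lemma B: a lower-level member inside `F` lies inside one block. -/
theorem subset_decomp {k l : ℕ} (hlk : l < k) {F L : Finset Ω} (hF : F ∈ S.level k)
    (hL : L ∈ S.level l) (hsub : L ⊆ F) : ∃ i < τ.n k, L ⊆ S.decomp F i := by
  have hk : 1 ≤ k := by omega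
  have hn : 0 < τ.n k := by have := τ.k_lt_n k hk; omega
  have hdi : ∀ i < τ.n k, S.decomp F i ∈ S.level (k - 1) :=
    fun i hi => S.decomp_mem k hk F hF i hi
  have hseg : ∀ i < τ.n k, IsInitialSegment (L ∩ S.decomp F i) L :=
    fun i hi => inter_initSeg_le S (k - 1) l (by omega) L hL (S.decomp F i) (hdi i hi)
  obtain ⟨i, hi, hmax⟩ := chain_max (A := fun i => L ∩ S.decomp F i) (τ.n k) hn
    (fun i hi j hj => initSeg_chain (hseg i hi) (hseg j hj))
  refine ⟨i, hi, fun x hx => ?_⟩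
  have hxF : x ∈ F := hsub hx
  rw [S.decomp_union k hk F hF] at hxF
  obtain ⟨j, hj, hxj⟩ := Finset.mem_biUnion.1 hxF
  exact (Finset.mem_inter.1 (hmax j (Finset.mem_range.1 hj)
    (Finset.mem_inter.2 ⟨hx, hxj⟩))).2

theorem level_le_of_subset {k l : ℕ} {F L : Finset Ω} (hF : F ∈ S.level k)
    (hL : L ∈ S.level l) (hsub : L ⊆ F) : l ≤ k := by
  have h1 := S.card_eq l L hL
  have h2 := S.card_eq k F hF
  have h3 := Finset.card_le_card hsub
  rw [h1, h2] at h3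
  exact (m_strictMono τ).le_iff_le.1 h3

end SchemeAux

namespace SchemeAux

open OpAux

variable {τ : SchemeType} {Ω : Type*} [LinearOrder Ω] (S : ConstructionScheme τ Ω)

/-- The canonical bijection between `E, F ∈ 𝓕_k` respects the canonical decompositions. -/
theorem opMap_decomp_agree {k : ℕ} (hk : 1 ≤ k) {E F : Finset Ω}
    (hE : E ∈ S.level k) (hF : F ∈ S.level k) {i : ℕ} (hi : i < τ.n k)
    {x : Ω} (hx : x ∈ S.decomp E i) :
    opMap E F x = opMap (S.decomp E i) (S.decomp F i) x := by
  have hcEF : F.card = E.card := by rw [S.card_eq k E hE, S.card_eq k F hF]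
  have hcd : ∀ j, j < τ.n k → (S.decomp F j).card = (S.decomp E j).card := by
    intro j hj
    rw [S.card_eq (k - 1) _ (S.decomp_mem k hk F hF j hj),
      S.card_eq (k - 1) _ (S.decomp_mem k hk E hE j hj)]
  have hcr : (S.root F).card = (S.root E).card := by
    rw [S.root_card k F hF, S.root_card k E hE]
  have hrE : ∀ j, j < τ.n k → IsInitialSegment (S.root E) (S.decomp E j) :=
    fun j hj => root_initSeg_decomp S hk hE hj
  have hrF : ∀ j, j < τ.n k → IsInitialSegment (S.root F) (S.decomp F j) :=
    fun j hj => root_initSeg_decomp S hk hF hj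
  -- agreement of block maps on the root
  have hagree : ∀ j, j < τ.n k → ∀ y ∈ S.root E,
      opMap (S.decomp E j) (S.decomp F j) y = opMap (S.root E) (S.root F) y :=
    fun j hj => opMap_agree_initSeg (hcd j hj) (hrE j hj) (hrF j hj) hcr
  have hagreeF : ∀ j, j < τ.n k → ∀ y ∈ S.root F,
      opMap (S.decomp F j) (S.decomp E j) y = opMap (S.root F) (S.root E) y :=
    fun j hj => opMap_agree_initSeg (hcd j hj).symm (hrF j hj) (hrE j hj) hcr.symm
  -- block maps send non-root points to non-root points
  have hblock : ∀ j, j < τ.n k → ∀ y ∈ S.decomp E j, y ∉ S.root E →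
      opMap (S.decomp E j) (S.decomp F j) y ∈ S.decomp F j \ S.root F := by
    intro j hj y hy hyR
    refine Finset.mem_sdiff.2 ⟨opMap_mem (hcd j hj) hy, fun hR => ?_⟩
    have h1 := hagreeF j hj _ hR
    rw [opMap_opMap (hcd j hj) hy] at h1
    exact hyR (h1 ▸ opMap_mem hcr.symm hR)
  -- the block containing a non-root point is unique
  have huniq : ∀ j1, j1 < τ.n k → ∀ j2, j2 < τ.n k → ∀ y, y ∈ S.decomp E j1 →
      y ∈ S.decomp E j2 → y ∉ S.root E → j1 = j2 := by
    intro j1 h1 j2 h2 y hy1 hy2 hyR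
    by_contra hne
    exact hyR ((S.decomp_root k hk E hE j1 h1 j2 h2 hne) ▸
      Finset.mem_inter.2 ⟨hy1, hy2⟩)
  have hcov : ∀ y, y ∈ E → ∃ j, j < τ.n k ∧ y ∈ S.decomp E j := by
    intro y hy
    rw [S.decomp_union k hk E hE] at hy
    obtain ⟨j, hj, hyj⟩ := Finset.mem_biUnion.1 hy
    exact ⟨j, Finset.mem_range.1 hj, hyj⟩
  classical
  set c : Ω → ℕ := fun y => if hy : y ∈ E then (hcov y hy).choose else 0 with hcdef
  have hcspec : ∀ y, y ∈ E → c y < τ.n k ∧ y ∈ S.decomp E (c y) := by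
    intro y hy
    simp only [hcdef, dif_pos hy]
    exact ⟨(hcov y hy).choose_spec.1, (hcov y hy).choose_spec.2⟩
  set ψ : Ω → Ω := fun y => opMap (S.decomp E (c y)) (S.decomp F (c y)) y with hψ
  have hψmem : ∀ y ∈ E, ψ y ∈ F := by
    intro y hy
    obtain ⟨h1, h2⟩ := hcspec y hy
    exact decomp_subset S hk hF h1 (opMap_mem (hcd _ h1) h2)
  have hψmono : ∀ y ∈ E, ∀ z ∈ E, y < z → ψ y < ψ z := by
    intro y hy z hz hyz
    obtain ⟨hcy, hyd⟩ := hcspec y hy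
    obtain ⟨hcz, hzd⟩ := hcspec z hz
    by_cases hyR : y ∈ S.root E
    · by_cases hzR : z ∈ S.root E
      · show opMap _ _ y < opMap _ _ z
        rw [hagree _ hcy y hyR, hagree _ hcz z hzR]
        exact opMap_strictMonoOn hcr hyR hzR hyz
      · have h1 : ψ y ∈ S.root F := by
          show opMap _ _ y ∈ _
          rw [hagree _ hcy y hyR]
          exact opMap_mem hcr hyR
        exact S.root_lt_decomp k hk F hF _ hcz _ h1 _ (hblock _ hcz z hzd hzR)
    · by_cases hzR : z ∈ S.root E
      · exact absurd ((S.root_initSeg k E hE).2 y hy z hzR hyz.le) hyR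
      · rcases lt_trichotomy (c y) (c z) with h | h | h
        · exact S.decomp_increasing k hk F hF _ _ h hcz _
            (hblock _ hcy y hyd hyR) _ (hblock _ hcz z hzd hzR)
        · show opMap _ _ y < opMap _ _ z
          rw [h]
          exact opMap_strictMonoOn (hcd _ hcz) (h ▸ hyd) hzd hyz
        · exfalso
          have := S.decomp_increasing k hk E hE _ _ h hcy
            z (Finset.mem_sdiff.2 ⟨hzd, hzR⟩) y (Finset.mem_sdiff.2 ⟨hyd, hyR⟩)
          exact absurd hyz (not_lt.2 this.le)
  have hxE : x ∈ E := decomp_subset S hk hE hi hx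
  have hmain := opMap_unique hcEF hψmem hψmono x hxE
  obtain ⟨hcx, hxd⟩ := hcspec x hxE
  rw [← hmain]
  show opMap (S.decomp E (c x)) (S.decomp F (c x)) x = _
  by_cases hxR : x ∈ S.root E
  · rw [hagree _ hcx x hxR, hagree _ hi x hxR]
  · rw [huniq _ hcx _ hi x hxd hx hxR]

end SchemeAux

namespace SchemeAux

open OpAux

variable {τ : SchemeType} {Ω : Type*} [LinearOrder Ω] (S : ConstructionScheme τ Ω)

theorem image_mem : ∀ k, ∀ E ∈ S.level k, ∀ F ∈ S.level k, ∀ l, ∀ L ∈ S.level l, L ⊆ E →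
    (∃ l', L.image (opMap E F) ∈ S.level l') ∧ L.image (opMap E F) ⊆ F := by
  intro k
  induction k using Nat.strong_induction_on with
  | _ k ih =>
  intro E hE F hF l L hL hsub
  have hcEF : F.card = E.card := by rw [S.card_eq k E hE, S.card_eq k F hF]
  have hlk : l ≤ k := level_le_of_subset S hE hL hsub
  rcases eq_or_lt_of_le hlk with h | h
  · subst h
    have hLE : L = E := Finset.eq_of_subset_of_card_le hsub
      (by rw [S.card_eq _ E hE, S.card_eq _ L hL])
    rw [hLE, opMap_image hcEF]
    exact ⟨⟨l, hF⟩, Finset.Subset.refl F⟩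
  · have hk : 1 ≤ k := by omega
    obtain ⟨i, hi, hLi⟩ := subset_decomp S h hE hL hsub
    have himg : L.image (opMap E F) = L.image (opMap (S.decomp E i) (S.decomp F i)) :=
      Finset.image_congr (fun x hx => opMap_decomp_agree S hk hE hF hi (hLi hx))
    rw [himg]
    have hd1 := S.decomp_mem k hk E hE i hi
    have hd2 := S.decomp_mem k hk F hF i hi
    have hrec := ih (k - 1) (by omega) _ hd1 _ hd2 l L hL hLi
    exact ⟨hrec.1, hrec.2.trans (decomp_subset S hk hF hi)⟩

end SchemeAux


/-- For `E, F ∈ 𝓕_k`, the pointwise image under the unique order preserving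
bijection `φ_{E,F} : E → F` of the family `𝓕 ↾ E = {L ∈ 𝓕 : L ⊆ E}` is exactly
`𝓕 ↾ F = {L ∈ 𝓕 : L ⊆ F}`. -/
theorem opMap_image_restrict {τ : SchemeType} (S : ConstructionScheme τ Omega1)
    {k : ℕ} {E F : Finset Omega1} (hE : E ∈ S.level k) (hF : F ∈ S.level k) :
    (fun L : Finset Omega1 => L.image (opMap E F)) ''
        {L : Finset Omega1 | (∃ l, L ∈ S.level l) ∧ L ⊆ E}
      = {L : Finset Omega1 | (∃ l, L ∈ S.level l) ∧ L ⊆ F} := by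
  have hcEF : F.card = E.card := by rw [S.card_eq k E hE, S.card_eq k F hF]
  ext M
  simp only [Set.mem_image, Set.mem_setOf_eq]
  constructor
  · rintro ⟨L, ⟨⟨l, hL⟩, hLE⟩, rfl⟩
    exact SchemeAux.image_mem S k E hE F hF l L hL hLE
  · rintro ⟨⟨l, hM⟩, hMF⟩
    refine ⟨M.image (opMap F E),
      ⟨(SchemeAux.image_mem S k F hF E hE l M hM hMF).1,
        (SchemeAux.image_mem S k F hF E hE l M hM hMF).2⟩, ?_⟩
    rw [Finset.image_image]
    have heq : ∀ y ∈ M, (opMap E F ∘ opMap F E) y = id y := fun y hy =>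
      OpAux.opMap_opMap hcEF.symm (hMF hy)
    rw [Finset.image_congr heq, Finset.image_id]
end
end

section
/- Let 𝓕 be a construction scheme of some type (m_k, n_k, r_k)_{k<ω}. Let F ∈ 𝓕_k, E ∈ 𝓕_l with E ⊆ F, and let μ ∈ E. Then there is E* ∈ 𝓕_l with E* ⊆ F such that: (1) E* ∩ (μ+1) = E ∩ (μ+1); and (2) E* ∖ μ is an interval of F (i.e. a set of consecutive elements of F: for all x < y < z in F, if x, z ∈ E* ∖ μ then y ∈ E* ∖ μ) with μ ∈ E*. -/
noncomputable section
open scoped Classical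

section Aux

variable {Ω : Type*} [LinearOrder Ω] {τ : SchemeType}

private lemma SchemeType.m_strictMono (τ : SchemeType) : StrictMono τ.m := by
  apply strictMono_nat_of_lt_succ
  intro k
  have h1 : τ.r (k + 1) < τ.m k := by simpa using τ.r_lt_m (k + 1) (by omega)
  have h2 : 2 ≤ τ.n (k + 1) := by have := τ.k_lt_n (k + 1) (by omega); omega
  have h3 := τ.m_rec (k + 1) (by omega)
  simp only [Nat.add_sub_cancel] at h3
  have h4 : 2 * (τ.m k - τ.r (k + 1)) ≤ τ.n (k + 1) * (τ.m k - τ.r (k + 1)) :=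
    Nat.mul_le_mul_right _ h2
  omega

private lemma filter_le_eq (S : ConstructionScheme τ Ω) {l : ℕ} {E E'' : Finset Ω}
    (hE : E ∈ S.level l) (hE'' : E'' ∈ S.level l) {μ : Ω} (h1 : μ ∈ E) (h2 : μ ∈ E'') :
    E.filter (fun x => x ≤ μ) = E''.filter (fun x => x ≤ μ) := by
  have A := S.inter_initSeg l E hE E'' hE''
  have B := S.inter_initSeg l E'' hE'' E hE
  ext x
  simp only [Finset.mem_filter]
  constructor
  · rintro ⟨hx, hxμ⟩
    exact ⟨(Finset.mem_inter.1 (A.2 x hx μ (Finset.mem_inter.2 ⟨h1, h2⟩) hxμ)).2, hxμ⟩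
  · rintro ⟨hx, hxμ⟩
    exact ⟨(Finset.mem_inter.1 (B.2 x hx μ (Finset.mem_inter.2 ⟨h2, h1⟩) hxμ)).2, hxμ⟩

private lemma root_subset_decomp (S : ConstructionScheme τ Ω) {k : ℕ} (hk1 : 1 ≤ k)
    {F : Finset Ω} (hF : F ∈ S.level k) {j : ℕ} (hj : j < τ.n k) :
    S.root F ⊆ S.decomp F j := by
  have hn : 1 < τ.n k := lt_of_le_of_lt hk1 (τ.k_lt_n k hk1)
  by_cases h0 : j = 0
  · have := S.decomp_root k hk1 F hF j hj 1 hn (by omega)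
    rw [← this]; exact Finset.inter_subset_left
  · have := S.decomp_root k hk1 F hF j hj 0 (by omega) h0
    rw [← this]; exact Finset.inter_subset_left

private lemma decomp_subset (S : ConstructionScheme τ Ω) {k : ℕ} (hk1 : 1 ≤ k)
    {F : Finset Ω} (hF : F ∈ S.level k) {j : ℕ} (hj : j < τ.n k) :
    S.decomp F j ⊆ F := by
  conv_rhs => rw [S.decomp_union k hk1 F hF]
  exact Finset.subset_biUnion_of_mem _ (Finset.mem_range.2 hj)

private lemma interval_lift (S : ConstructionScheme τ Ω) {k : ℕ} (hk1 : 1 ≤ k)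
    {F : Finset Ω} (hF : F ∈ S.level k) {j : ℕ} (hj : j < τ.n k) {A : Finset Ω}
    (hA : IsIntervalOf A (S.decomp F j))
    (hside : j = 0 ∨ A ⊆ S.decomp F j \ S.root F) :
    IsIntervalOf A F := by
  refine ⟨hA.1.trans (decomp_subset S hk1 hF hj), ?_⟩
  intro x hx z hz y hy hxy hyz
  have hxj : x ∈ S.decomp F j := hA.1 hx
  have hzj : z ∈ S.decomp F j := hA.1 hz
  -- it suffices to show y ∈ decomp F j
  suffices hyFj : y ∈ S.decomp F j from hA.2 x hx z hz y hyFj hxy hyz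
  by_cases hyr : y ∈ S.root F
  · exact root_subset_decomp S hk1 hF hj hyr
  · obtain ⟨p, hp, hyp⟩ := Finset.mem_biUnion.1 ((S.decomp_union k hk1 F hF) ▸ hy)
    rw [Finset.mem_range] at hp
    have hyp' : y ∈ S.decomp F p \ S.root F := Finset.mem_sdiff.2 ⟨hyp, hyr⟩
    rcases lt_trichotomy p j with h | h | h
    · -- y < x, contradiction
      exfalso
      have hxj' : x ∈ S.decomp F j \ S.root F := by
        rcases hside with rfl | hs
        · omega
        · exact hs hx
      exact absurd (S.decomp_increasing k hk1 F hF p j h hj y hyp' x hxj') (by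
        exact not_lt.2 hxy.le)
    · rw [h] at hyp; exact hyp
    · -- z < y, contradiction
      exfalso
      rcases hside with rfl | hs
      · by_cases hzr : z ∈ S.root F
        · exact absurd (S.root_lt_decomp k hk1 F hF p hp z hzr y hyp') (not_lt.2 hyz.le)
        · exact absurd (S.decomp_increasing k hk1 F hF 0 p h hp z
            (Finset.mem_sdiff.2 ⟨hzj, hzr⟩) y hyp') (not_lt.2 hyz.le)
      · exact absurd (S.decomp_increasing k hk1 F hF j p h hp z (hs hz) y hyp')
          (not_lt.2 hyz.le)

/-- Key lemma: inside any `F ∈ 𝓕_k` and for any `μ ∈ F` and `l ≤ k`, there is a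
level-`l` member `E' ∋ μ` of the scheme inside `F` whose part above `μ` is an
interval of `F`. -/
private lemma exists_interval_piece (S : ConstructionScheme τ Ω) :
    ∀ k l, l ≤ k → ∀ F ∈ S.level k, ∀ μ ∈ F,
      ∃ E' ∈ S.level l, E' ⊆ F ∧ μ ∈ E' ∧
        IsIntervalOf (E'.filter (fun x => μ ≤ x)) F := by
  intro k
  induction k with
  | zero =>
    intro l hl F hF μ hμ
    interval_cases l
    refine ⟨F, hF, subset_rfl, hμ, Finset.filter_subset _ _, ?_⟩
    intro x hx z hz y hy hxy hyz
    rw [Finset.mem_filter] at hx ⊢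
    exact ⟨hy, hx.2.trans hxy.le⟩
  | succ k ih =>
    intro l hl F hF μ hμ
    rcases eq_or_lt_of_le hl with rfl | hl'
    · refine ⟨F, hF, subset_rfl, hμ, Finset.filter_subset _ _, ?_⟩
      intro x hx z hz y hy hxy hyz
      rw [Finset.mem_filter] at hx ⊢
      exact ⟨hy, hx.2.trans hxy.le⟩
    · have hl'' : l ≤ k := Nat.lt_succ_iff.1 hl'
      have hk1 : 1 ≤ k + 1 := by omega
      by_cases hroot : μ ∈ S.root F
      · -- descend into the 0-th piece
        have hn0 : 0 < τ.n (k + 1) := lt_of_le_of_lt (Nat.zero_le _) (τ.k_lt_n _ hk1)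
        have hF0 : S.decomp F 0 ∈ S.level k := by
          simpa using S.decomp_mem (k + 1) hk1 F hF 0 hn0
        have hμ0 : μ ∈ S.decomp F 0 := root_subset_decomp S hk1 hF hn0 hroot
        obtain ⟨E', hE'l, hE'sub, hμE', hint⟩ := ih l hl'' _ hF0 μ hμ0
        exact ⟨E', hE'l, hE'sub.trans (decomp_subset S hk1 hF hn0), hμE',
          interval_lift S hk1 hF hn0 hint (Or.inl rfl)⟩
      · -- μ lies in some block; descend into that block
        obtain ⟨j, hj, hμj⟩ := Finset.mem_biUnion.1 ((S.decomp_union (k + 1) hk1 F hF) ▸ hμ)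
        rw [Finset.mem_range] at hj
        have hFj : S.decomp F j ∈ S.level k := by
          simpa using S.decomp_mem (k + 1) hk1 F hF j hj
        obtain ⟨E', hE'l, hE'sub, hμE', hint⟩ := ih l hl'' _ hFj μ hμj
        have hdiff : E'.filter (fun x => μ ≤ x) ⊆ S.decomp F j \ S.root F := by
          intro x hx
          rw [Finset.mem_filter] at hx
          refine Finset.mem_sdiff.2 ⟨hE'sub hx.1, fun hxr => ?_⟩
          exact absurd (S.root_lt_decomp (k + 1) hk1 F hF j hj x hxr μ
            (Finset.mem_sdiff.2 ⟨hμj, hroot⟩)) (not_lt.2 hx.2)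
        exact ⟨E', hE'l, hE'sub.trans (decomp_subset S hk1 hF hj), hμE',
          interval_lift S hk1 hF hj hint (Or.inr hdiff)⟩

end Aux

/-- If `F ∈ 𝓕_k`, `E ∈ 𝓕_l`, `E ⊆ F` and `μ ∈ E`, then there is a copy
`E* ∈ 𝓕_l` of `E` inside `F` with `E* ∩ (μ+1) = E ∩ (μ+1)` and `E* ∖ μ` an interval
of `F` containing `μ`. -/
theorem exists_copy_interval {τ : SchemeType} (S : ConstructionScheme τ Omega1)
    {k l : ℕ} {E F : Finset Omega1} (hF : F ∈ S.level k) (hE : E ∈ S.level l)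
    (hEF : E ⊆ F) {μ : Omega1} (hμ : μ ∈ E) :
    ∃ E' ∈ S.level l, E' ⊆ F ∧ μ ∈ E' ∧
      E'.filter (fun x => x ≤ μ) = E.filter (fun x => x ≤ μ) ∧
      IsIntervalOf (E'.filter (fun x => μ ≤ x)) F := by
  have hlk : l ≤ k := by
    have hcard : τ.m l ≤ τ.m k := by
      rw [← S.card_eq l E hE, ← S.card_eq k F hF]
      exact Finset.card_le_card hEF
    exact (τ.m_strictMono.le_iff_le).1 hcard
  obtain ⟨E', hE'l, hE'sub, hμE', hint⟩ :=
    exists_interval_piece S k l hlk F hF μ (hEF hμ)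
  exact ⟨E', hE'l, hE'sub, hμE', filter_le_eq S hE'l hE hμE' hμ, hint⟩
end
end

section
/- Let m ≥ 1 and suppose there exists an (m+1)-capturing construction scheme (of some type). Then (★)_m fails: there is an uncountable Γ ⊆ ω^ω such that for every uncountable Γ_0 ⊆ Γ there exist g_0, …, g_m ∈ Γ_0 and k < ω with g_0↾k = … = g_m↾k and |{g_0(k), …, g_m(k)}| = m + 1. -/
noncomputable section
open scoped Classical

/-! ### Auxiliary machinery -/

namespace StarAux

variable {Ω : Type*} [LinearOrder Ω]

/-- position of `α` in `E`: the number of elements of `E` below `α`. -/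
def pos (E : Finset Ω) (α : Ω) : ℕ := (E.filter (· < α)).card

lemma pos_orderIsoOfFin (s : Finset Ω) {n : ℕ} (h : s.card = n) (i : Fin n) :
    pos s (s.orderIsoOfFin h i : Ω) = i := by
  classical
  have him : s.filter (· < (s.orderIsoOfFin h i : Ω))
      = (Finset.univ.filter (fun j : Fin n => j < i)).image
          (fun j : Fin n => (s.orderIsoOfFin h j : Ω)) := by
    ext y
    simp only [Finset.mem_filter, Finset.mem_image, Finset.mem_univ, true_and]
    constructor
    · rintro ⟨hy, hlt⟩
      refine ⟨(s.orderIsoOfFin h).symm ⟨y, hy⟩, ?_, by simp⟩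
      have : ((s.orderIsoOfFin h) ((s.orderIsoOfFin h).symm ⟨y, hy⟩) : Ω)
          < (s.orderIsoOfFin h i : Ω) := by simpa using hlt
      rw [← (s.orderIsoOfFin h).lt_iff_lt]
      exact_mod_cast this
    · rintro ⟨j, hj, rfl⟩
      refine ⟨Finset.coe_mem _, ?_⟩
      exact_mod_cast (s.orderIsoOfFin h).lt_iff_lt.2 hj
  rw [pos, him, Finset.card_image_of_injective]
  · have : ((Finset.univ.filter (fun j : Fin n => j < i)).image Fin.val) = Finset.range i := by
      ext a
      simp only [Finset.mem_image, Finset.mem_filter, Finset.mem_univ, true_and,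
        Finset.mem_range]
      constructor
      · rintro ⟨j, hj, rfl⟩; exact hj
      · intro ha; exact ⟨⟨a, ha.trans i.isLt⟩, by exact ha, rfl⟩
    have := congrArg Finset.card this
    rwa [Finset.card_image_of_injective _ Fin.val_injective, Finset.card_range] at this
  · intro a b hab
    have : (s.orderIsoOfFin h) a = (s.orderIsoOfFin h) b := Subtype.ext hab
    exact (s.orderIsoOfFin h).injective this

lemma pos_opMap {E F : Finset Ω} (h : F.card = E.card) {x : Ω} (hx : x ∈ E) :
    pos F (opMap E F x) = pos E x := by
  rw [opMap, dif_pos ⟨hx, h⟩, pos_orderIsoOfFin]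
  have : x = (E.orderIsoOfFin rfl ((E.orderIsoOfFin rfl).symm ⟨x, hx⟩) : Ω) := by simp
  conv_rhs => rw [this, pos_orderIsoOfFin]

lemma pos_lt_pos {E : Finset Ω} {α β : Ω} (hα : α ∈ E) (hab : α < β) :
    pos E α < pos E β := by
  apply Finset.card_lt_card
  constructor
  · intro x hx
    simp only [Finset.mem_filter] at hx ⊢
    exact ⟨hx.1, hx.2.trans hab⟩
  · intro hsub
    have : α ∈ E.filter (· < α) := hsub (by simp [hα, hab])
    simp at this

lemma nat_block_unique {d r q q' i i' : ℕ} (hq : r ≤ q) (hq2 : q < d + r) (hq' : r ≤ q')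
    (hq2' : q' < d + r) (heq : i * d + q = i' * d + q') : q = q' := by
  have key : ∀ a b p p' : ℕ, a < b → p < d + r → r ≤ p' → a * d + p = b * d + p' → False := by
    intro a b p p' hab hp hp' he
    have h1 : a * d + d ≤ b * d := by
      have hab' : a + 1 ≤ b := hab
      calc a * d + d = (a + 1) * d := by ring
        _ ≤ b * d := Nat.mul_le_mul_right d hab'
    generalize a * d = A at h1 he
    generalize b * d = B at h1 he
    omega
  rcases lt_trichotomy i i' with hlt | rfl | hgt
  · exact absurd (key i i' q q' hlt hq2 hq' heq) not_false
  · generalize i * d = A at heq; omega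
  · exact absurd (key i' i q' q hgt hq2' hq heq.symm) not_false

/-! ### `ω₁` facts -/

lemma mk_Omega1 : Cardinal.mk Omega1 = Cardinal.lift.{1} (Cardinal.aleph 1 : Cardinal.{0}) := by
  have h := Ordinal.mk_Iio_ordinal omega1
  have he : Cardinal.mk Omega1 = Cardinal.mk (Set.Iio omega1) := rfl
  rw [he, h, omega1, Cardinal.card_ord]

lemma aleph0_lt_mk_Omega1 : Cardinal.aleph0.{1} < Cardinal.mk Omega1 := by
  rw [mk_Omega1, ← Cardinal.lift_aleph0.{1, 0}]
  exact Cardinal.lift_lt.2 Cardinal.aleph0_lt_aleph_one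

instance : Infinite Omega1 := by
  rw [Cardinal.infinite_iff]
  exact le_of_lt aleph0_lt_mk_Omega1

lemma not_countable_of_injective {f : Omega1 → (ℕ → ℕ)} (hf : Function.Injective f) :
    ¬ (Set.range f).Countable := by
  intro hcnt
  have : Countable (Set.range f) := hcnt.to_subtype
  have : Countable Omega1 := Countable.of_equiv _ (Equiv.ofInjective f hf).symm
  exact absurd Cardinal.mk_le_aleph0 (not_le.2 aleph0_lt_mk_Omega1)

/-- An uncountable subset of `ω₁` admits a strictly increasing `ω₁`-sequence inside it. -/
lemma exists_strictMono_into (A : Set Omega1) (hA : ¬ A.Countable) :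
    ∃ e : Omega1 → Omega1, StrictMono e ∧ ∀ o, e o ∈ A := by
  classical
  set At : Set Ordinal.{0} := Subtype.val '' A with hAt
  set T : Set Ordinal.{0} := At ∪ {o | omega1 ≤ o} with hTdef
  have hT : ¬ BddAbove T := by
    rintro ⟨b, hb⟩
    have hlt1 : (max b omega1) < max b omega1 + 1 := by
      rw [Ordinal.add_one_eq_succ]; exact Order.lt_succ _
    have hmem : (max b omega1) + 1 ∈ T :=
      Or.inr (le_trans (le_max_right _ _) (le_of_lt hlt1))
    have := hb hmem
    exact absurd (lt_of_le_of_lt (le_trans this (le_max_left _ _)) hlt1) (lt_irrefl _)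
  have hmemT := Ordinal.enumOrd_mem hT
  have hmono := Ordinal.enumOrd_strictMono hT
  have hrange := Ordinal.range_enumOrd hT
  have hlt : ∀ o < omega1, Ordinal.enumOrd T o < omega1 := by
    by_contra hcon
    push_neg at hcon
    obtain ⟨o₀, ho₀, hge⟩ := hcon
    have hsub : At ⊆ Ordinal.enumOrd T '' (Set.Iio o₀) := by
      intro a ha
      have halt : a < omega1 := by
        obtain ⟨x, _, rfl⟩ := ha
        exact x.2
      have : a ∈ Set.range (Ordinal.enumOrd T) := by
        rw [hrange]; exact Or.inl ha
      obtain ⟨o, rfl⟩ := this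
      refine ⟨o, ?_, rfl⟩
      by_contra hoo
      have : omega1 ≤ Ordinal.enumOrd T o :=
        le_trans hge (hmono.monotone (not_lt.1 hoo))
      exact absurd halt (not_lt.2 this)
    have hcnt : (Set.Iio o₀).Countable := by
      rw [← Set.countable_coe_iff, ← Cardinal.mk_le_aleph0_iff]
      rw [Ordinal.mk_Iio_ordinal]
      have hcard : o₀.card < Cardinal.aleph 1 := Cardinal.lt_ord.1 ho₀
      have hle : o₀.card ≤ Cardinal.aleph0 := by
        rwa [← Cardinal.succ_aleph0, Order.lt_succ_iff] at hcard
      calc Cardinal.lift.{1} o₀.card ≤ Cardinal.lift.{1} Cardinal.aleph0 :=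
            Cardinal.lift_le.2 hle
        _ = Cardinal.aleph0 := by simp
    have hAtc : At.Countable := (hcnt.image _).mono hsub
    have : A.Countable := by
      have hpre : A ⊆ Subtype.val ⁻¹' At := fun x hx => ⟨x, hx, rfl⟩
      exact (hAtc.preimage Subtype.val_injective).mono hpre
    exact hA this
  refine ⟨fun o => ⟨Ordinal.enumOrd T o.val, hlt _ o.2⟩, ?_, ?_⟩
  · intro a b hab
    exact Subtype.mk_lt_mk.2 (hmono hab)
  · intro o
    rcases hmemT o.val with hmem | hmem
    · obtain ⟨x, hx, hval⟩ := hmem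
      show (⟨Ordinal.enumOrd T o.val, hlt _ o.2⟩ : Omega1) ∈ A
      have hxx : x = (⟨Ordinal.enumOrd T o.val, hlt _ o.2⟩ : Omega1) := Subtype.ext hval
      rwa [hxx] at hx
    · exact absurd (hlt o.val o.2) (not_lt.2 hmem)

/-! ### Scheme type facts -/

variable {τ : SchemeType}

lemma two_le_n (k : ℕ) (hk : 1 ≤ k) : 2 ≤ τ.n k := by
  have := τ.k_lt_n k hk; omega

lemma m_strictMono : StrictMono τ.m := by
  apply strictMono_nat_of_lt_succ
  intro k
  have hr := τ.r_lt_m (k + 1) (by omega)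
  have hn : 2 ≤ τ.n (k + 1) := two_le_n (k + 1) (by omega)
  have hm := τ.m_rec (k + 1) (by omega)
  simp only [Nat.add_sub_cancel] at hr hm
  have h2 : 2 * (τ.m k - τ.r (k + 1)) ≤ τ.n (k + 1) * (τ.m k - τ.r (k + 1)) :=
    Nat.mul_le_mul_right _ hn
  generalize τ.n (k + 1) * (τ.m k - τ.r (k + 1)) = B at hm h2
  omega

/-! ### Scheme facts -/

variable (S : ConstructionScheme τ Omega1)

lemma descend : ∀ l k, k ≤ l → ∀ F ∈ S.level l, ∀ α ∈ F, ∃ E, E ∈ S.level k ∧ α ∈ E := by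
  intro l
  induction l with
  | zero =>
    intro k hk F hF α hα
    have : k = 0 := by omega
    subst this
    exact ⟨F, hF, hα⟩
  | succ l ih =>
    intro k hk F hF α hα
    by_cases hkl : k = l + 1
    · subst hkl; exact ⟨F, hF, hα⟩
    · have hk' : k ≤ l := by omega
      have hdu := S.decomp_union (l + 1) (by omega) F hF
      rw [hdu] at hα
      obtain ⟨i, hi, hαi⟩ := Finset.mem_biUnion.1 hα
      have hmem := S.decomp_mem (l + 1) (by omega) F hF i (Finset.mem_range.1 hi)
      simp only [Nat.add_sub_cancel] at hmem
      exact ih k hk' _ hmem α hαi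

lemma exists_level_mem (α : Omega1) (k : ℕ) : ∃ E, E ∈ S.level k ∧ α ∈ E := by
  classical
  obtain ⟨t, -, ht⟩ := (Set.infinite_univ (α := Omega1)).exists_subset_card_eq (τ.m k + 1)
  obtain ⟨l, F, hF, hsub⟩ := S.cover (insert α t)
  have hc1 : τ.m k + 1 ≤ F.card := by
    calc τ.m k + 1 = t.card := ht.symm
      _ ≤ (insert α t).card := Finset.card_le_card (Finset.subset_insert _ _)
      _ ≤ F.card := Finset.card_le_card hsub
  rw [S.card_eq l F hF] at hc1
  have hkl : k ≤ l := by
    by_contra hc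
    have := m_strictMono (τ := τ).monotone (le_of_lt (not_le.1 hc))
    omega
  exact descend S l k hkl F hF α (hsub (Finset.mem_insert_self _ _))

lemma pos_eq_of_level {k : ℕ} {E E' : Finset Omega1} (hE : E ∈ S.level k)
    (hE' : E' ∈ S.level k) {α : Omega1} (hα : α ∈ E) (hα' : α ∈ E') :
    pos E α = pos E' α := by
  classical
  have h1 := S.inter_initSeg k E hE E' hE'
  have h2 := S.inter_initSeg k E' hE' E hE
  have hm : α ∈ E ∩ E' := Finset.mem_inter.2 ⟨hα, hα'⟩
  have hm' : α ∈ E' ∩ E := Finset.mem_inter.2 ⟨hα', hα⟩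
  have hfe : E.filter (· < α) = (E ∩ E').filter (· < α) := by
    ext x
    simp only [Finset.mem_filter]
    exact ⟨fun ⟨hx, hxl⟩ => ⟨h1.2 x hx α hm (le_of_lt hxl), hxl⟩,
      fun ⟨hx, hxl⟩ => ⟨(Finset.inter_subset_left) hx, hxl⟩⟩
  have hfe' : E'.filter (· < α) = (E' ∩ E).filter (· < α) := by
    ext x
    simp only [Finset.mem_filter]
    exact ⟨fun ⟨hx, hxl⟩ => ⟨h2.2 x hx α hm' (le_of_lt hxl), hxl⟩,
      fun ⟨hx, hxl⟩ => ⟨(Finset.inter_subset_left) hx, hxl⟩⟩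
  rw [pos, pos, hfe, hfe', Finset.inter_comm]

/-- The canonical position of `α` at level `k`. -/
noncomputable def posAt (α : Omega1) (k : ℕ) : ℕ :=
  pos (exists_level_mem S α k).choose α

lemma posAt_eq {k : ℕ} {E : Finset Omega1} (hE : E ∈ S.level k) {α : Omega1} (hα : α ∈ E) :
    posAt S α k = pos E α :=
  pos_eq_of_level S (exists_level_mem S α k).choose_spec.1 hE
    (exists_level_mem S α k).choose_spec.2 hα

lemma root_subset_decomp {l : ℕ} (hl : 1 ≤ l) {E : Finset Omega1} (hE : E ∈ S.level l)
    {i : ℕ} (hi : i < τ.n l) : S.root E ⊆ S.decomp E i := by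
  have hn : 2 ≤ τ.n l := two_le_n l hl
  set j : ℕ := if i = 0 then 1 else 0 with hj
  have hji : j ≠ i := by
    by_cases h0 : i = 0 <;> simp [hj, h0]
    omega
  have hjn : j < τ.n l := by
    by_cases h0 : i = 0 <;> simp [hj, h0] <;> omega
  rw [← S.decomp_root l hl E hE i hi j hjn (Ne.symm hji)]
  exact Finset.inter_subset_left

lemma decomp_subset {l : ℕ} (hl : 1 ≤ l) {E : Finset Omega1} (hE : E ∈ S.level l)
    {i : ℕ} (hi : i < τ.n l) : S.decomp E i ⊆ E := by
  conv_rhs => rw [S.decomp_union l hl E hE]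
  exact Finset.subset_biUnion_of_mem _ (Finset.mem_range.2 hi)

lemma pos_decomp {l : ℕ} (hl : 1 ≤ l) {E : Finset Omega1} (hE : E ∈ S.level l)
    {i : ℕ} (hi : i < τ.n l) {α : Omega1} (hα : α ∈ S.decomp E i) :
    (α ∈ S.root E ∧ pos (S.decomp E i) α = pos E α ∧ pos E α < τ.r l) ∨
    (α ∉ S.root E ∧ pos E α = i * (τ.m (l - 1) - τ.r l) + pos (S.decomp E i) α ∧
      τ.r l ≤ pos (S.decomp E i) α ∧ pos (S.decomp E i) α < τ.m (l - 1)) := by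
  classical
  have hdu := S.decomp_union l hl E hE
  have hRcard : (S.root E).card = τ.r l := S.root_card l E hE
  have hDcard : ∀ j, j < τ.n l → (S.decomp E j).card = τ.m (l - 1) := fun j hj =>
    S.card_eq _ _ (S.decomp_mem l hl E hE j hj)
  by_cases hroot : α ∈ S.root E
  · left
    have h1 : (S.decomp E i).filter (· < α) = (S.root E).filter (· < α) := by
      ext x
      simp only [Finset.mem_filter]
      constructor
      · rintro ⟨hxD, hxlt⟩
        refine ⟨?_, hxlt⟩
        by_contra hxR
        exact absurd (S.root_lt_decomp l hl E hE i hi α hroot x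
          (Finset.mem_sdiff.2 ⟨hxD, hxR⟩)) (not_lt.2 (le_of_lt hxlt))
      · rintro ⟨hxR, hxlt⟩
        exact ⟨root_subset_decomp S hl hE hi hxR, hxlt⟩
    have h2 : E.filter (· < α) = (S.root E).filter (· < α) := by
      ext x
      simp only [Finset.mem_filter]
      constructor
      · rintro ⟨hxE, hxlt⟩
        refine ⟨?_, hxlt⟩
        rw [hdu] at hxE
        obtain ⟨j, hj, hxj⟩ := Finset.mem_biUnion.1 hxE
        by_contra hxR
        exact absurd (S.root_lt_decomp l hl E hE j (Finset.mem_range.1 hj) α hroot x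
          (Finset.mem_sdiff.2 ⟨hxj, hxR⟩)) (not_lt.2 (le_of_lt hxlt))
      · rintro ⟨hxR, hxlt⟩
        exact ⟨decomp_subset S hl hE hi (root_subset_decomp S hl hE hi hxR), hxlt⟩
    refine ⟨hroot, by rw [pos, pos, h1, h2], ?_⟩
    rw [pos, h2, ← hRcard]
    apply Finset.card_lt_card
    refine Finset.ssubset_iff_of_subset (Finset.filter_subset _ _) |>.2 ⟨α, hroot, by simp⟩
  · right
    have hαs : α ∈ S.decomp E i \ S.root E := Finset.mem_sdiff.2 ⟨hα, hroot⟩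
    have hkey : E.filter (· < α)
        = ((S.root E) ∪ (Finset.range i).biUnion (fun j => S.decomp E j \ S.root E))
          ∪ ((S.decomp E i).filter (· < α) \ S.root E) := by
      ext x
      simp only [Finset.mem_filter, Finset.mem_union, Finset.mem_biUnion, Finset.mem_sdiff,
        Finset.mem_range]
      constructor
      · rintro ⟨hxE, hxlt⟩
        by_cases hxR : x ∈ S.root E
        · exact Or.inl (Or.inl hxR)
        · rw [hdu] at hxE
          obtain ⟨j, hj, hxj⟩ := Finset.mem_biUnion.1 hxE
          have hjn := Finset.mem_range.1 hj
          rcases lt_trichotomy j i with hji | rfl | hij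
          · exact Or.inl (Or.inr ⟨j, hji, hxj, hxR⟩)
          · exact Or.inr ⟨⟨hxj, hxlt⟩, hxR⟩
          · exact absurd (S.decomp_increasing l hl E hE i j hij hjn α hαs x
              (Finset.mem_sdiff.2 ⟨hxj, hxR⟩)) (not_lt.2 (le_of_lt hxlt))
      · rintro ((hxR | ⟨j, hji, hxj, hxR⟩) | ⟨⟨hxD, hxlt⟩, hxR⟩)
        · exact ⟨decomp_subset S hl hE hi (root_subset_decomp S hl hE hi hxR),
            S.root_lt_decomp l hl E hE i hi x hxR α hαs⟩
        · exact ⟨decomp_subset S hl hE (lt_trans hji hi) hxj,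
            S.decomp_increasing l hl E hE j i hji hi x (Finset.mem_sdiff.2 ⟨hxj, hxR⟩) α hαs⟩
        · exact ⟨decomp_subset S hl hE hi hxD, hxlt⟩
    have hdisj1 : Disjoint (S.root E)
        ((Finset.range i).biUnion (fun j => S.decomp E j \ S.root E)) := by
      rw [Finset.disjoint_left]
      intro x hxR hxB
      obtain ⟨j, _, hxj⟩ := Finset.mem_biUnion.1 hxB
      exact (Finset.mem_sdiff.1 hxj).2 hxR
    have hdisj2 : Disjoint
        ((S.root E) ∪ (Finset.range i).biUnion (fun j => S.decomp E j \ S.root E))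
        ((S.decomp E i).filter (· < α) \ S.root E) := by
      rw [Finset.disjoint_left]
      intro x hxU hxT
      obtain ⟨hxf, hxR⟩ := Finset.mem_sdiff.1 hxT
      have hxDi : x ∈ S.decomp E i := (Finset.mem_filter.1 hxf).1
      rcases Finset.mem_union.1 hxU with hxR' | hxB
      · exact hxR hxR'
      · obtain ⟨j, hj, hxj⟩ := Finset.mem_biUnion.1 hxB
        have hji : j < i := Finset.mem_range.1 hj
        have : x ∈ S.decomp E j ∩ S.decomp E i :=
          Finset.mem_inter.2 ⟨(Finset.mem_sdiff.1 hxj).1, hxDi⟩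
        have hr := S.decomp_root l hl E hE j (lt_trans hji hi) i hi (Nat.ne_of_lt hji)
        exact hxR (by rw [← hr]; exact Finset.mem_inter.2 (Finset.mem_inter.1 this))
    have hfR : S.root E ⊆ (S.decomp E i).filter (· < α) := by
      intro y hy
      exact Finset.mem_filter.2 ⟨root_subset_decomp S hl hE hi hy,
        S.root_lt_decomp l hl E hE i hi y hy α hαs⟩
    have hple : τ.r l ≤ pos (S.decomp E i) α := by
      rw [pos, ← hRcard]
      exact Finset.card_le_card hfR
    have hplt : pos (S.decomp E i) α < τ.m (l - 1) := by
      rw [pos, ← hDcard i hi]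
      apply Finset.card_lt_card
      exact Finset.ssubset_iff_of_subset (Finset.filter_subset _ _) |>.2 ⟨α, hα, by simp⟩
    have hbu : ((Finset.range i).biUnion (fun j => S.decomp E j \ S.root E)).card
        = i * (τ.m (l - 1) - τ.r l) := by
      rw [Finset.card_biUnion]
      · rw [Finset.sum_congr rfl (fun j hj => ?_), Finset.sum_const, Finset.card_range,
          smul_eq_mul]
        have hjn : j < τ.n l := lt_trans (Finset.mem_range.1 hj) hi
        rw [Finset.card_sdiff_of_subset (root_subset_decomp S hl hE hjn), hDcard j hjn, hRcard]
      · intro x hx y hy hxy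
        rw [Function.onFun, Finset.disjoint_left]
        intro z hzx hzy
        have : z ∈ S.decomp E x ∩ S.decomp E y :=
          Finset.mem_inter.2 ⟨(Finset.mem_sdiff.1 hzx).1, (Finset.mem_sdiff.1 hzy).1⟩
        have hr := S.decomp_root l hl E hE x (lt_trans (Finset.mem_range.1 hx) hi) y
          (lt_trans (Finset.mem_range.1 hy) hi) hxy
        exact (Finset.mem_sdiff.1 hzx).2
          (by rw [← hr]; exact Finset.mem_inter.2 (Finset.mem_inter.1 this))
    have hfc : ((S.decomp E i).filter (· < α) \ S.root E).card = pos (S.decomp E i) α - τ.r l := by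
      rw [Finset.card_sdiff_of_subset hfR, hRcard]; rfl
    refine ⟨hroot, ?_, hple, hplt⟩
    rw [pos, hkey, Finset.card_union_of_disjoint hdisj2, Finset.card_union_of_disjoint hdisj1,
      hRcard, hbu, hfc]
    generalize i * (τ.m (l - 1) - τ.r l) = P
    omega

lemma pos_det {l : ℕ} (hl : 1 ≤ l) {E E' : Finset Omega1} (hE : E ∈ S.level l)
    (hE' : E' ∈ S.level l) {α β : Omega1} (hα : α ∈ E) (hβ : β ∈ E')
    (hp : pos E α = pos E' β) : posAt S α (l - 1) = posAt S β (l - 1) := by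
  classical
  have hrm : τ.r l < τ.m (l - 1) := τ.r_lt_m l hl
  obtain ⟨i, hi, hαi⟩ : ∃ i, i < τ.n l ∧ α ∈ S.decomp E i := by
    rw [S.decomp_union l hl E hE] at hα
    obtain ⟨i, hi, h⟩ := Finset.mem_biUnion.1 hα
    exact ⟨i, Finset.mem_range.1 hi, h⟩
  obtain ⟨i', hi', hβi⟩ : ∃ i', i' < τ.n l ∧ β ∈ S.decomp E' i' := by
    rw [S.decomp_union l hl E' hE'] at hβ
    obtain ⟨i', hi', h⟩ := Finset.mem_biUnion.1 hβ
    exact ⟨i', Finset.mem_range.1 hi', h⟩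
  have hDα := S.decomp_mem l hl E hE i hi
  have hDβ := S.decomp_mem l hl E' hE' i' hi'
  rw [posAt_eq S hDα hαi, posAt_eq S hDβ hβi]
  rcases pos_decomp S hl hE hi hαi with ⟨_, e1, e2⟩ | ⟨_, e1, e2, e3⟩ <;>
    rcases pos_decomp S hl hE' hi' hβi with ⟨_, f1, f2⟩ | ⟨_, f1, f2, f3⟩
  · rw [e1, f1, hp]
  · exfalso
    have : τ.r l ≤ pos E' β := by
      calc τ.r l ≤ pos (S.decomp E' i') β := f2
        _ ≤ i' * (τ.m (l - 1) - τ.r l) + pos (S.decomp E' i') β := Nat.le_add_left _ _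
        _ = pos E' β := f1.symm
    omega
  · exfalso
    have : τ.r l ≤ pos E α := by
      calc τ.r l ≤ pos (S.decomp E i) α := e2
        _ ≤ i * (τ.m (l - 1) - τ.r l) + pos (S.decomp E i) α := Nat.le_add_left _ _
        _ = pos E α := e1.symm
    omega
  · have heq : i * (τ.m (l - 1) - τ.r l) + pos (S.decomp E i) α
        = i' * (τ.m (l - 1) - τ.r l) + pos (S.decomp E' i') β := by
      rw [← e1, ← f1, hp]
    exact nat_block_unique e2 (by omega) f2 (by omega) heq

lemma posAt_down (α β : Omega1) :
    ∀ d l, posAt S α l = posAt S β l → posAt S α (l - d) = posAt S β (l - d) := by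
  intro d
  induction d with
  | zero => intro l h; simpa using h
  | succ d ih =>
    intro l h
    have h' := ih l h
    by_cases h0 : l - d = 0
    · have : l - (d + 1) = l - d := by omega
      rw [this]; exact h'
    · have h1 : 1 ≤ l - d := by omega
      obtain ⟨E, hE, hαE⟩ := exists_level_mem S α (l - d)
      obtain ⟨E', hE', hβE'⟩ := exists_level_mem S β (l - d)
      have hpe : pos E α = pos E' β := by
        rw [← posAt_eq S hE hαE, ← posAt_eq S hE' hβE']; exact h'
      have := pos_det S h1 hE hE' hαE hβE' hpe
      have hll : l - d - 1 = l - (d + 1) := by omega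
      rwa [hll] at this

end StarAux


/-- If `m ≥ 1` and there is an `(m+1)`-capturing construction scheme, then
`(★)_m` fails: there is an uncountable `Γ ⊆ ω^ω` such that every uncountable `Γ₀ ⊆ Γ`
contains `g_0, …, g_m` agreeing below some `k` and taking `m+1` distinct values at `k`. -/
theorem star_m_fails (m : ℕ) (hm : 1 ≤ m)
    (h : ∃ τ : SchemeType, ∃ S : ConstructionScheme τ Omega1, S.IsNCapturing (m + 1)) :
    ∃ Γ : Set (ℕ → ℕ), ¬ Γ.Countable ∧
      ∀ Γ₀ ⊆ Γ, ¬ Γ₀.Countable →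
        ∃ g : ℕ → (ℕ → ℕ), (∀ i ≤ m, g i ∈ Γ₀) ∧
          ∃ k : ℕ, (∀ i ≤ m, ∀ j ≤ m, ∀ l < k, g i l = g j l) ∧
            (∀ i ≤ m, ∀ j ≤ m, i ≠ j → g i k ≠ g j k) := by
  
  classical
  obtain ⟨τ, S, hcap⟩ := h
  set G : Omega1 → (ℕ → ℕ) := fun α k => StarAux.posAt S α k with hG
  have hinj : Function.Injective G := by
    intro a b hab
    by_contra hne
    obtain ⟨l, F, hF, hsub⟩ := S.cover {a, b}
    have ha : a ∈ F := hsub (by simp)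
    have hb : b ∈ F := hsub (by simp)
    have hval : StarAux.posAt S a l = StarAux.posAt S b l := congrFun hab l
    rw [StarAux.posAt_eq S hF ha, StarAux.posAt_eq S hF hb] at hval
    rcases lt_or_gt_of_ne hne with hlt | hgt
    · exact absurd hval (ne_of_lt (StarAux.pos_lt_pos ha hlt))
    · exact absurd hval.symm (ne_of_lt (StarAux.pos_lt_pos hb hgt))
  refine ⟨Set.range G, StarAux.not_countable_of_injective hinj, ?_⟩
  intro Γ₀ hsubΓ hΓ₀
  set A : Set Omega1 := {α | G α ∈ Γ₀} with hA
  have hAun : ¬ A.Countable := by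
    intro hAc
    apply hΓ₀
    have hsub2 : Γ₀ ⊆ G '' A := by
      intro g hg
      obtain ⟨α, rfl⟩ := hsubΓ hg
      exact ⟨α, hg, rfl⟩
    exact ((hAc.image G).mono hsub2)
  obtain ⟨e, hemono, heA⟩ := StarAux.exists_strictMono_into A hAun
  have hds : IsDeltaSystem (fun o => {e o}) ∅ := by
    intro a b hab
    refine ⟨?_, ?_⟩
    · ext x
      simp only [Finset.mem_inter, Finset.mem_singleton, Finset.notMem_empty, iff_false]
      rintro ⟨rfl, h2⟩
      exact (ne_of_lt (hemono hab)) h2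
    · intro x hx y hy
      simp only [Finset.sdiff_empty, Finset.mem_singleton] at hx hy
      subst hx; subst hy
      exact hemono hab
  obtain ⟨ξ, hξmono, K, hK1, hKn, F, hF, -, hmem, hop⟩ := hcap (fun o => {e o}) ∅ hds
  set η : ℕ → Omega1 := fun i => e (ξ i) with hη
  have hηmem : ∀ i, i < m + 1 → η i ∈ S.decomp F i \ S.root F := by
    intro i hi
    have := hmem i hi
    simp only [Finset.sdiff_empty, Finset.singleton_subset_iff] at this
    exact this
  have hηop : ∀ i, i < m + 1 → opMap (S.decomp F 0) (S.decomp F i) (η 0) = η i := by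
    intro i hi
    have := hop i hi
    simp only [Finset.image_singleton] at this
    exact Finset.singleton_injective this
  refine ⟨fun i => G (η i), fun i hi => heA (ξ i), K, ?_, ?_⟩
  · have hbase : ∀ i, i ≤ m →
        StarAux.posAt S (η i) (K - 1) = StarAux.posAt S (η 0) (K - 1) := by
      intro i hi
      have hin : i < τ.n K := lt_of_lt_of_le (by omega) hKn
      have h0n : 0 < τ.n K := lt_of_lt_of_le (by omega) hKn
      have hdi := S.decomp_mem K hK1 F hF i hin
      have hd0 := S.decomp_mem K hK1 F hF 0 h0n
      have him : η i ∈ S.decomp F i := (Finset.mem_sdiff.1 (hηmem i (by omega))).1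
      have h0m : η 0 ∈ S.decomp F 0 := (Finset.mem_sdiff.1 (hηmem 0 (by omega))).1
      have hcard : (S.decomp F i).card = (S.decomp F 0).card := by
        rw [S.card_eq _ _ hdi, S.card_eq _ _ hd0]
      rw [StarAux.posAt_eq S hdi him, StarAux.posAt_eq S hd0 h0m, ← hηop i (by omega)]
      exact StarAux.pos_opMap hcard h0m
    intro i hi j hj l hl
    have Hi := StarAux.posAt_down S (η i) (η 0) ((K - 1) - l) (K - 1) (hbase i hi)
    have Hj := StarAux.posAt_down S (η j) (η 0) ((K - 1) - l) (K - 1) (hbase j hj)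
    have hll : (K - 1) - ((K - 1) - l) = l := by omega
    rw [hll] at Hi Hj
    show StarAux.posAt S (η i) l = StarAux.posAt S (η j) l
    rw [Hi, Hj]
  · intro i hi j hj hij
    have hin : i < τ.n K := lt_of_lt_of_le (by omega) hKn
    have hjn : j < τ.n K := lt_of_lt_of_le (by omega) hKn
    have hiF : η i ∈ F :=
      StarAux.decomp_subset S hK1 hF hin (Finset.mem_sdiff.1 (hηmem i (by omega))).1
    have hjF : η j ∈ F :=
      StarAux.decomp_subset S hK1 hF hjn (Finset.mem_sdiff.1 (hηmem j (by omega))).1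
    show StarAux.posAt S (η i) K ≠ StarAux.posAt S (η j) K
    rw [StarAux.posAt_eq S hF hiF, StarAux.posAt_eq S hF hjF]
    rcases lt_or_gt_of_ne hij with hlt | hgt
    · have hij' : η i < η j := S.decomp_increasing K hK1 F hF i j hlt hjn (η i)
        (hηmem i (by omega)) (η j) (hηmem j (by omega))
      exact ne_of_lt (StarAux.pos_lt_pos hiF hij')
    · have hij' : η j < η i := S.decomp_increasing K hK1 F hF j i hgt hin (η j)
        (hηmem j (by omega)) (η i) (hηmem i (by omega))
      exact ne_of_gt (StarAux.pos_lt_pos hjF hij')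
end
end

section
/- Let 𝓕 be a construction scheme of some type (m_k, n_k, r_k)_{k<ω}. Then there exists a family (f_α)_{α<ω₁} of functions from ω to ω such that for every k ≥ 1, every F ∈ 𝓕_k with canonical decomposition (F_i)_{i<n_k}, every α ∈ F_0 ∖ R(F), and all i < j < n_k: f_{φ_i(α)}↾k = f_{φ_j(α)}↾k and f_{φ_i(α)}(k) ≠ f_{φ_j(α)}(k). -/
noncomputable section
open scoped Classical

section RankLemmas

variable {Ω : Type*} [LinearOrder Ω]

/-- The number of elements of `E` strictly below `γ`. -/
def rankIn (E : Finset Ω) (γ : Ω) : ℕ := (E.filter (fun x => x < γ)).card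

lemma rankIn_lt_rankIn {E : Finset Ω} {β γ : Ω} (hβ : β ∈ E) (h : β < γ) :
    rankIn E β < rankIn E γ := by
  apply Finset.card_lt_card
  have hsub : E.filter (fun x => x < β) ⊆ E.filter (fun x => x < γ) := by
    intro x hx
    simp only [Finset.mem_filter] at *
    exact ⟨hx.1, lt_trans hx.2 h⟩
  rw [Finset.ssubset_iff_of_subset hsub]
  exact ⟨β, Finset.mem_filter.2 ⟨hβ, h⟩,
    fun hc => absurd (Finset.mem_filter.1 hc).2 (lt_irrefl β)⟩

lemma rankIn_lt_card {E : Finset Ω} {γ : Ω} (h : γ ∈ E) : rankIn E γ < E.card := by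
  apply Finset.card_lt_card
  rw [Finset.ssubset_iff_of_subset (Finset.filter_subset _ _)]
  exact ⟨γ, h, fun hc => absurd (Finset.mem_filter.1 hc).2 (lt_irrefl γ)⟩

lemma rankIn_initSeg {R E : Finset Ω} (h : IsInitialSegment R E) {β : Ω} (hβ : β ∈ R) :
    rankIn E β = rankIn R β := by
  simp only [rankIn]
  congr 1
  ext x
  simp only [Finset.mem_filter]
  exact ⟨fun hx => ⟨h.2 x hx.1 β hβ hx.2.le, hx.2⟩, fun hx => ⟨h.1 hx.1, hx.2⟩⟩

lemma mem_initSeg_iff_rank {R E : Finset Ω} (h : IsInitialSegment R E) {β : Ω} (hβ : β ∈ E) :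
    β ∈ R ↔ rankIn E β < R.card := by
  constructor
  · intro hβR
    have hsub : E.filter (fun x => x < β) ⊆ R.erase β := by
      intro x hx
      obtain ⟨hxE, hlt⟩ := Finset.mem_filter.1 hx
      exact Finset.mem_erase.2 ⟨ne_of_lt hlt, h.2 x hxE β hβR hlt.le⟩
    calc rankIn E β ≤ (R.erase β).card := Finset.card_le_card hsub
    _ < R.card := Finset.card_erase_lt_of_mem hβR
  · intro hlt
    by_contra hβR
    have hsub : R ⊆ E.filter (fun x => x < β) := by
      intro x hxR
      refine Finset.mem_filter.2 ⟨h.1 hxR, ?_⟩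
      rcases lt_or_ge x β with h1 | h1
      · exact h1
      · exact absurd (h.2 β hβ x hxR h1) hβR
    have := Finset.card_le_card hsub
    simp only [rankIn] at hlt
    omega

/-! ### Lemmas about `opMap` -/

lemma opMap_spec {E F : Finset Ω} (h : F.card = E.card) {x : Ω} (hx : x ∈ E) :
    opMap E F x = ((F.orderIsoOfFin h) ((E.orderIsoOfFin rfl).symm ⟨x, hx⟩) : Ω) := by
  rw [opMap, dif_pos ⟨hx, h⟩]

lemma opMap_mem {E F : Finset Ω} (h : F.card = E.card) {x : Ω} (hx : x ∈ E) :
    opMap E F x ∈ F := by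
  rw [opMap_spec h hx]
  exact ((F.orderIsoOfFin h) ((E.orderIsoOfFin rfl).symm ⟨x, hx⟩)).2

lemma opMap_lt {E F : Finset Ω} (h : F.card = E.card) {x y : Ω} (hx : x ∈ E) (hy : y ∈ E)
    (hxy : x < y) : opMap E F x < opMap E F y := by
  rw [opMap_spec h hx, opMap_spec h hy]
  have h1 : (⟨x, hx⟩ : {a // a ∈ E}) < ⟨y, hy⟩ := Subtype.mk_lt_mk.2 hxy
  have h2 := (E.orderIsoOfFin rfl).symm.lt_iff_lt.2 h1
  have h3 := (F.orderIsoOfFin h).lt_iff_lt.2 h2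
  exact_mod_cast h3

lemma opMap_surjOn {E F : Finset Ω} (h : F.card = E.card) {y : Ω} (hy : y ∈ F) :
    ∃ x ∈ E, opMap E F x = y := by
  set i := (F.orderIsoOfFin h).symm ⟨y, hy⟩ with hi
  refine ⟨((E.orderIsoOfFin rfl) i : Ω), ((E.orderIsoOfFin rfl) i).2, ?_⟩
  rw [opMap_spec h ((E.orderIsoOfFin rfl) i).2]
  have h1 : (⟨((E.orderIsoOfFin rfl) i : Ω), ((E.orderIsoOfFin rfl) i).2⟩ : {a // a ∈ E})
      = (E.orderIsoOfFin rfl) i := Subtype.ext rfl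
  rw [h1, OrderIso.symm_apply_apply, hi, OrderIso.apply_symm_apply]

lemma rankIn_opMap {E F : Finset Ω} (h : F.card = E.card) {x : Ω} (hx : x ∈ E) :
    rankIn F (opMap E F x) = rankIn E x := by
  simp only [rankIn]
  have himg : F.filter (fun z => z < opMap E F x)
      = (E.filter (fun z => z < x)).image (opMap E F) := by
    ext z
    simp only [Finset.mem_filter, Finset.mem_image]
    constructor
    · rintro ⟨hzF, hzlt⟩
      obtain ⟨w, hw, rfl⟩ := opMap_surjOn h hzF
      refine ⟨w, ⟨hw, ?_⟩, rfl⟩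
      rcases lt_trichotomy w x with h1 | h1 | h1
      · exact h1
      · exact absurd (h1 ▸ hzlt) (lt_irrefl _)
      · exact absurd (lt_trans hzlt (opMap_lt h hx hw h1)) (lt_irrefl _)
    · rintro ⟨w, ⟨hwE, hwlt⟩, rfl⟩
      exact ⟨opMap_mem h hwE, opMap_lt h hwE hx hwlt⟩
  rw [himg, Finset.card_image_of_injOn]
  intro a ha b hb hab
  have haE : a ∈ E := (Finset.mem_filter.1 ha).1
  have hbE : b ∈ E := (Finset.mem_filter.1 hb).1
  rcases lt_trichotomy a b with h1 | h1 | h1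
  · exact absurd (hab ▸ opMap_lt h haE hbE h1) (lt_irrefl _)
  · exact h1
  · exact absurd (hab ▸ opMap_lt h hbE haE h1) (lt_irrefl _)

end RankLemmas

section SchemeLemmas

variable {Ω : Type*} [LinearOrder Ω] {τ : SchemeType}

lemma rankIn_eq_of_level (S : ConstructionScheme τ Ω) {l : ℕ} {E F : Finset Ω}
    (hE : E ∈ S.level l) (hF : F ∈ S.level l) {γ : Ω} (hγE : γ ∈ E) (hγF : γ ∈ F) :
    rankIn E γ = rankIn F γ := by
  obtain ⟨_, h1⟩ := S.inter_initSeg l E hE F hF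
  obtain ⟨_, h2⟩ := S.inter_initSeg l F hF E hE
  simp only [rankIn]
  congr 1
  ext x
  simp only [Finset.mem_filter]
  constructor
  · rintro ⟨hxE, hlt⟩
    have := h1 x hxE γ (Finset.mem_inter.2 ⟨hγE, hγF⟩) hlt.le
    exact ⟨(Finset.mem_inter.1 this).2, hlt⟩
  · rintro ⟨hxF, hlt⟩
    have := h2 x hxF γ (Finset.mem_inter.2 ⟨hγF, hγE⟩) hlt.le
    exact ⟨(Finset.mem_inter.1 this).2, hlt⟩

/-- The rank of `γ` in any level-`l` member of the scheme containing it (or `0`). -/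
def rkv (S : ConstructionScheme τ Ω) (γ : Ω) (l : ℕ) : ℕ :=
  if h : ∃ E, E ∈ S.level l ∧ γ ∈ E then rankIn h.choose γ else 0

lemma rkv_eq (S : ConstructionScheme τ Ω) {l : ℕ} {F : Finset Ω} (hF : F ∈ S.level l)
    {γ : Ω} (hγ : γ ∈ F) : rkv S γ l = rankIn F γ := by
  have h : ∃ E, E ∈ S.level l ∧ γ ∈ E := ⟨F, hF, hγ⟩
  rw [rkv, dif_pos h]
  exact rankIn_eq_of_level S h.choose_spec.1 hF h.choose_spec.2 hγ

variable (S : ConstructionScheme τ Ω) {k : ℕ} {F : Finset Ω}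

lemma root_subset_decomp_s6 (hk : 1 ≤ k) (hF : F ∈ S.level k) {t : ℕ} (ht : t < τ.n k) :
    S.root F ⊆ S.decomp F t := by
  have h2 : 2 ≤ τ.n k := by have := τ.k_lt_n k hk; omega
  have hj : (if t = 0 then 1 else 0) < τ.n k ∧ t ≠ (if t = 0 then 1 else 0) := by
    split <;> omega
  have := S.decomp_root k hk F hF t ht _ hj.1 hj.2
  rw [← this]
  exact Finset.inter_subset_left

lemma decomp_subset_s6 (hk : 1 ≤ k) (hF : F ∈ S.level k) {t : ℕ} (ht : t < τ.n k) :
    S.decomp F t ⊆ F := by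
  intro x hx
  rw [S.decomp_union k hk F hF]
  exact Finset.mem_biUnion.2 ⟨t, Finset.mem_range.2 ht, hx⟩

lemma exists_decomp_mem (hk : 1 ≤ k) (hF : F ∈ S.level k) {β : Ω} (hβ : β ∈ F) :
    ∃ t, t < τ.n k ∧ β ∈ S.decomp F t := by
  rw [S.decomp_union k hk F hF] at hβ
  obtain ⟨t, ht, hβt⟩ := Finset.mem_biUnion.1 hβ
  exact ⟨t, Finset.mem_range.1 ht, hβt⟩

lemma root_initSeg_decomp (hk : 1 ≤ k) (hF : F ∈ S.level k) {t : ℕ} (ht : t < τ.n k) :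
    IsInitialSegment (S.root F) (S.decomp F t) :=
  ⟨root_subset_decomp_s6 S hk hF ht,
   fun x hx y hy hxy => (S.root_initSeg k F hF).2 x (decomp_subset_s6 S hk hF ht hx) y hy hxy⟩

/-- The key counting formula: the rank in `F` of a non-root element of the `t`-th piece. -/
lemma rank_formula (hk : 1 ≤ k) (hF : F ∈ S.level k) {t : ℕ} (ht : t < τ.n k) {β : Ω}
    (hβ : β ∈ S.decomp F t) (hβr : β ∉ S.root F) :
    rankIn F β = t * (τ.m (k-1) - τ.r k) + rankIn (S.decomp F t) β := by
  have hcardR : (S.root F).card = τ.r k := S.root_card k F hF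
  have hDmem : ∀ u, u < τ.n k → S.decomp F u ∈ S.level (k-1) :=
    fun u hu => S.decomp_mem k hk F hF u hu
  have hcardD : ∀ u, u < τ.n k → (S.decomp F u).card = τ.m (k-1) :=
    fun u hu => S.card_eq (k-1) _ (hDmem u hu)
  have hcardDR : ∀ u, u < τ.n k → (S.decomp F u \ S.root F).card = τ.m (k-1) - τ.r k := by
    intro u hu
    rw [Finset.card_sdiff_of_subset (root_subset_decomp_s6 S hk hF hu), hcardD u hu, hcardR]
  have hβs : β ∈ S.decomp F t \ S.root F := Finset.mem_sdiff.2 ⟨hβ, hβr⟩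
  have hrle : τ.r k ≤ rankIn (S.decomp F t) β := by
    have hiff := mem_initSeg_iff_rank (root_initSeg_decomp S hk hF ht) hβ
    rw [hcardR] at hiff
    have := mt hiff.2 hβr
    omega
  -- the filter splits into the root and the filtered non-root parts of the pieces
  have hfilter : F.filter (fun x => x < β)
      = S.root F ∪ (Finset.range (τ.n k)).biUnion
          (fun u => (S.decomp F u \ S.root F).filter (fun x => x < β)) := by
    ext x
    simp only [Finset.mem_union, Finset.mem_filter, Finset.mem_biUnion, Finset.mem_range,
      Finset.mem_sdiff]
    constructor
    · rintro ⟨hxF, hlt⟩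
      by_cases hxR : x ∈ S.root F
      · exact Or.inl hxR
      · obtain ⟨u, hu, hxu⟩ := exists_decomp_mem S hk hF hxF
        exact Or.inr ⟨u, hu, ⟨hxu, hxR⟩, hlt⟩
    · rintro (hxR | ⟨u, hu, ⟨hxu, hxR⟩, hlt⟩)
      · exact ⟨(S.root_initSeg k F hF).1 hxR, S.root_lt_decomp k hk F hF t ht x hxR β hβs⟩
      · exact ⟨decomp_subset_s6 S hk hF hu hxu, hlt⟩
  have hdisj1 : Disjoint (S.root F) ((Finset.range (τ.n k)).biUnion
      (fun u => (S.decomp F u \ S.root F).filter (fun x => x < β))) := by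
    rw [Finset.disjoint_left]
    intro x hxR hx
    simp only [Finset.mem_biUnion, Finset.mem_filter, Finset.mem_sdiff] at hx
    obtain ⟨u, _, ⟨_, hxR'⟩, _⟩ := hx
    exact hxR' hxR
  have hdisj2 : ∀ u ∈ Finset.range (τ.n k), ∀ v ∈ Finset.range (τ.n k), u ≠ v →
      Disjoint ((S.decomp F u \ S.root F).filter (fun x => x < β))
        ((S.decomp F v \ S.root F).filter (fun x => x < β)) := by
    intro u hu v hv huv
    rw [Finset.disjoint_left]
    intro x hx1 hx2
    simp only [Finset.mem_filter, Finset.mem_sdiff] at hx1 hx2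
    have : x ∈ S.decomp F u ∩ S.decomp F v := Finset.mem_inter.2 ⟨hx1.1.1, hx2.1.1⟩
    rw [S.decomp_root k hk F hF u (Finset.mem_range.1 hu) v (Finset.mem_range.1 hv) huv] at this
    exact hx1.1.2 this
  have hsum : ∑ u ∈ Finset.range (τ.n k),
      ((S.decomp F u \ S.root F).filter (fun x => x < β)).card
      = t * (τ.m (k-1) - τ.r k) + (rankIn (S.decomp F t) β - τ.r k) := by
    have hsubr : Finset.range (t+1) ⊆ Finset.range (τ.n k) := Finset.range_subset_range.2 (by omega)
    have hzero : ∀ u ∈ Finset.range (τ.n k), u ∉ Finset.range (t+1) →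
        ((S.decomp F u \ S.root F).filter (fun x => x < β)).card = 0 := by
      intro u hu hu'
      simp only [Finset.mem_range] at hu hu'
      have htu : t < u := by omega
      rw [Finset.card_eq_zero]
      ext x
      simp only [Finset.mem_filter, Finset.mem_sdiff, Finset.notMem_empty, iff_false, not_and]
      rintro ⟨hxu, hxR⟩ hlt
      have := S.decomp_increasing k hk F hF t u htu hu β hβs x (Finset.mem_sdiff.2 ⟨hxu, hxR⟩)
      exact absurd hlt (not_lt.2 this.le)
    rw [← Finset.sum_subset hsubr hzero, Finset.sum_range_succ]
    have hfull : ∀ u ∈ Finset.range t,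
        ((S.decomp F u \ S.root F).filter (fun x => x < β)).card = τ.m (k-1) - τ.r k := by
      intro u hu
      have hut : u < t := Finset.mem_range.1 hu
      have heq : (S.decomp F u \ S.root F).filter (fun x => x < β)
          = S.decomp F u \ S.root F := by
        apply Finset.filter_true_of_mem
        intro x hx
        exact S.decomp_increasing k hk F hF u t hut ht x hx β hβs
      rw [heq, hcardDR u (lt_trans hut ht)]
    have hlast : ((S.decomp F t \ S.root F).filter (fun x => x < β)).card
        = rankIn (S.decomp F t) β - τ.r k := by
      have hsplit : (S.decomp F t).filter (fun x => x < β)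
          = S.root F ∪ (S.decomp F t \ S.root F).filter (fun x => x < β) := by
        ext x
        simp only [Finset.mem_union, Finset.mem_filter, Finset.mem_sdiff]
        constructor
        · rintro ⟨hxt, hlt⟩
          by_cases hxR : x ∈ S.root F
          · exact Or.inl hxR
          · exact Or.inr ⟨⟨hxt, hxR⟩, hlt⟩
        · rintro (hxR | ⟨⟨hxt, hxR⟩, hlt⟩)
          · exact ⟨root_subset_decomp_s6 S hk hF ht hxR,
              S.root_lt_decomp k hk F hF t ht x hxR β hβs⟩
          · exact ⟨hxt, hlt⟩
      have hd : Disjoint (S.root F) ((S.decomp F t \ S.root F).filter (fun x => x < β)) := by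
        rw [Finset.disjoint_left]
        intro x hxR hx
        simp only [Finset.mem_filter, Finset.mem_sdiff] at hx
        exact hx.1.2 hxR
      have : rankIn (S.decomp F t) β
          = τ.r k + ((S.decomp F t \ S.root F).filter (fun x => x < β)).card := by
        rw [rankIn, hsplit, Finset.card_union_of_disjoint hd, hcardR]
      omega
    rw [Finset.sum_congr rfl hfull, Finset.sum_const, Finset.card_range, smul_eq_mul, hlast]
  have hfinal : rankIn F β = τ.r k + (t * (τ.m (k-1) - τ.r k)
      + (rankIn (S.decomp F t) β - τ.r k)) := by
    rw [rankIn, hfilter, Finset.card_union_of_disjoint hdisj1, Finset.card_biUnion hdisj2,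
      hsum, hcardR]
  rw [hfinal]
  generalize t * (τ.m (k-1) - τ.r k) = A
  omega

lemma rank_bounds (hk : 1 ≤ k) (hF : F ∈ S.level k) {t : ℕ} (ht : t < τ.n k) {β : Ω}
    (hβ : β ∈ S.decomp F t) (hβr : β ∉ S.root F) :
    τ.r k ≤ rankIn (S.decomp F t) β ∧ rankIn (S.decomp F t) β < τ.m (k-1) := by
  constructor
  · have hiff := mem_initSeg_iff_rank (root_initSeg_decomp S hk hF ht) hβ
    rw [S.root_card k F hF] at hiff
    have := mt hiff.2 hβr
    omega
  · have := rankIn_lt_card hβ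
    rwa [S.card_eq (k-1) _ (S.decomp_mem k hk F hF t ht)] at this

lemma arith_unique {q r t t' d d' : ℕ} (hd1 : r ≤ d) (hd2 : d < r + q)
    (hd1' : r ≤ d') (hd2' : d' < r + q) (h : t * q + d = t' * q + d') : t = t' ∧ d = d' := by
  have key : t = t' := by
    rcases lt_trichotomy t t' with h1 | h1 | h1
    · exfalso
      have h2 : (t+1) * q ≤ t' * q := Nat.mul_le_mul_right q h1
      have h3 : (t+1) * q = t * q + q := by ring
      linarith
    · exact h1
    · exfalso
      have h2 : (t'+1) * q ≤ t * q := Nat.mul_le_mul_right q h1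
      have h3 : (t'+1) * q = t' * q + q := by ring
      linarith
  subst key
  exact ⟨rfl, by omega⟩

/-- Coherence: elements with the same rank in level-`s` members have the same `rkv`
values at all levels `l ≤ s`. -/
lemma rkv_coherence : ∀ s : ℕ, ∀ E, E ∈ S.level s → ∀ E', E' ∈ S.level s →
    ∀ β, β ∈ E → ∀ γ, γ ∈ E' → rankIn E β = rankIn E' γ →
    ∀ l, l ≤ s → rkv S β l = rkv S γ l := by
  intro s
  induction s with
  | zero =>
    intro E hE E' hE' β hβ γ hγ hr l hl
    have : l = 0 := Nat.le_zero.1 hl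
    subst this
    rw [rkv_eq S hE hβ, rkv_eq S hE' hγ]
    exact hr
  | succ s ih =>
    intro E hE E' hE' β hβ γ hγ hr l hl
    rcases eq_or_lt_of_le hl with rfl | hl'
    · rw [rkv_eq S hE hβ, rkv_eq S hE' hγ]
      exact hr
    have hls : l ≤ s := by omega
    have hk1 : 1 ≤ s + 1 := Nat.le_add_left 1 s
    have hss : s + 1 - 1 = s := by omega
    have hmem : ∀ i, i < τ.n (s+1) → S.decomp E i ∈ S.level s := by
      intro i hi
      have := S.decomp_mem (s+1) hk1 E hE i hi
      rwa [hss] at this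
    have hmem' : ∀ i, i < τ.n (s+1) → S.decomp E' i ∈ S.level s := by
      intro i hi
      have := S.decomp_mem (s+1) hk1 E' hE' i hi
      rwa [hss] at this
    have h2n : 2 ≤ τ.n (s+1) := by have := τ.k_lt_n (s+1) hk1; omega
    obtain ⟨t, ht, hβt⟩ := exists_decomp_mem S hk1 hE hβ
    obtain ⟨t', ht', hγt⟩ := exists_decomp_mem S hk1 hE' hγ
    have hcardRE : (S.root E).card = τ.r (s+1) := S.root_card (s+1) E hE
    have hcardRE' : (S.root E').card = τ.r (s+1) := S.root_card (s+1) E' hE'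
    by_cases hroot : β ∈ S.root E
    · -- both in the roots; pass to the 0-th pieces
      have hrβ : rankIn E β < τ.r (s+1) := by
        have := (mem_initSeg_iff_rank (S.root_initSeg (s+1) E hE) hβ).1 hroot
        omega
      have hγroot : γ ∈ S.root E' := by
        apply (mem_initSeg_iff_rank (S.root_initSeg (s+1) E' hE') hγ).2
        omega
      have h0n : 0 < τ.n (s+1) := by omega
      have hβ0 : β ∈ S.decomp E 0 := root_subset_decomp_s6 S hk1 hE h0n hroot
      have hγ0 : γ ∈ S.decomp E' 0 := root_subset_decomp_s6 S hk1 hE' h0n hγroot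
      have he1 : rankIn (S.decomp E 0) β = rankIn E β := by
        rw [rankIn_initSeg (root_initSeg_decomp S hk1 hE h0n) hroot,
          rankIn_initSeg (S.root_initSeg (s+1) E hE) hroot]
      have he2 : rankIn (S.decomp E' 0) γ = rankIn E' γ := by
        rw [rankIn_initSeg (root_initSeg_decomp S hk1 hE' h0n) hγroot,
          rankIn_initSeg (S.root_initSeg (s+1) E' hE') hγroot]
      exact ih _ (hmem 0 h0n) _ (hmem' 0 h0n) β hβ0 γ hγ0 (by rw [he1, he2, hr]) l hls
    · -- neither in roots
      have hγroot : γ ∉ S.root E' := by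
        intro hc
        have h1 : rankIn E' γ < τ.r (s+1) := by
          have := (mem_initSeg_iff_rank (S.root_initSeg (s+1) E' hE') hγ).1 hc
          omega
        have h2 : τ.r (s+1) ≤ rankIn E β := by
          have := mt (mem_initSeg_iff_rank (S.root_initSeg (s+1) E hE) hβ).2 hroot
          omega
        omega
      have hf1 := rank_formula S hk1 hE ht hβt hroot
      have hf2 := rank_formula S hk1 hE' ht' hγt hγroot
      rw [hss] at hf1 hf2
      have hb1 := rank_bounds S hk1 hE ht hβt hroot
      have hb2 := rank_bounds S hk1 hE' ht' hγt hγroot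
      rw [hss] at hb1 hb2
      have hrm : τ.r (s+1) < τ.m s := by
        have := τ.r_lt_m (s+1) hk1; rwa [hss] at this
      have hq : τ.r (s+1) + (τ.m s - τ.r (s+1)) = τ.m s := by omega
      have heq : t * (τ.m s - τ.r (s+1)) + rankIn (S.decomp E t) β
          = t' * (τ.m s - τ.r (s+1)) + rankIn (S.decomp E' t') γ := by
        rw [← hf1, ← hf2, hr]
      obtain ⟨htt, hdd⟩ := arith_unique hb1.1 (by omega) hb2.1 (by omega) heq
      subst htt
      exact ih _ (hmem t ht) _ (hmem' t ht') β hβt γ hγt hdd l hls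

end SchemeLemmas

/-- For every construction scheme `𝓕` there is a family `(f_α)_{α<ω₁}` of
functions `ω → ω` such that for every `k ≥ 1`, every `F ∈ 𝓕_k` with canonical
decomposition `(Fᵢ)_{i<n_k}`, every `α ∈ F₀ ∖ R(F)` and all `i < j < n_k`:
`f_{φᵢ(α)} ↾ k = f_{φⱼ(α)} ↾ k` and `f_{φᵢ(α)}(k) ≠ f_{φⱼ(α)}(k)`. -/
theorem exists_branching_family {τ : SchemeType} (S : ConstructionScheme τ Omega1) :
    ∃ f : Omega1 → (ℕ → ℕ),
      ∀ k, 1 ≤ k → ∀ F ∈ S.level k, ∀ α ∈ S.decomp F 0 \ S.root F,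
        ∀ i j, i < j → j < τ.n k →
          (∀ l < k, f (opMap (S.decomp F 0) (S.decomp F i) α) l
                  = f (opMap (S.decomp F 0) (S.decomp F j) α) l) ∧
          f (opMap (S.decomp F 0) (S.decomp F i) α) k
            ≠ f (opMap (S.decomp F 0) (S.decomp F j) α) k := by
  refine ⟨rkv S, ?_⟩
  intro k hk F hF α hα i j hij hjn
  obtain ⟨hα0, hαR⟩ := Finset.mem_sdiff.1 hα
  have hin : i < τ.n k := lt_trans hij hjn
  have h0n : 0 < τ.n k := by omega
  have hF0 : S.decomp F 0 ∈ S.level (k-1) := S.decomp_mem k hk F hF 0 h0n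
  have hFi : S.decomp F i ∈ S.level (k-1) := S.decomp_mem k hk F hF i hin
  have hFj : S.decomp F j ∈ S.level (k-1) := S.decomp_mem k hk F hF j hjn
  have hci : (S.decomp F i).card = (S.decomp F 0).card := by
    rw [S.card_eq _ _ hFi, S.card_eq _ _ hF0]
  have hcj : (S.decomp F j).card = (S.decomp F 0).card := by
    rw [S.card_eq _ _ hFj, S.card_eq _ _ hF0]
  set βi := opMap (S.decomp F 0) (S.decomp F i) α with hbi
  set βj := opMap (S.decomp F 0) (S.decomp F j) α with hbj
  have hβi : βi ∈ S.decomp F i := opMap_mem hci hα0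
  have hβj : βj ∈ S.decomp F j := opMap_mem hcj hα0
  have hri : rankIn (S.decomp F i) βi = rankIn (S.decomp F 0) α := rankIn_opMap hci hα0
  have hrj : rankIn (S.decomp F j) βj = rankIn (S.decomp F 0) α := rankIn_opMap hcj hα0
  have hrα : τ.r k ≤ rankIn (S.decomp F 0) α := (rank_bounds S hk hF h0n hα0 hαR).1
  have hβiR : βi ∉ S.root F := by
    intro hc
    have := (mem_initSeg_iff_rank (root_initSeg_decomp S hk hF hin) hβi).1 hc
    rw [S.root_card k F hF] at this
    omega
  have hβjR : βj ∉ S.root F := by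
    intro hc
    have := (mem_initSeg_iff_rank (root_initSeg_decomp S hk hF hjn) hβj).1 hc
    rw [S.root_card k F hF] at this
    omega
  constructor
  · intro l hl
    exact rkv_coherence S (k-1) _ hFi _ hFj βi hβi βj hβj (by rw [hri, hrj]) l (by omega)
  · have hlt : βi < βj := S.decomp_increasing k hk F hF i j hij hjn βi
      (Finset.mem_sdiff.2 ⟨hβi, hβiR⟩) βj (Finset.mem_sdiff.2 ⟨hβj, hβjR⟩)
    have hβiF : βi ∈ F := decomp_subset_s6 S hk hF hin hβi
    have hβjF : βj ∈ F := decomp_subset_s6 S hk hF hjn hβj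
    rw [rkv_eq S hF hβiF, rkv_eq S hF hβjF]
    exact ne_of_lt (rankIn_lt_rankIn hβiF hlt)
end
end
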